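/- arXiv:1811.05846 — 5 statements merged into one kernel-verified Lean document; each statement's English description precedes it below -/
import Mathlib

section
/- For any c ≥ 0, the number of n-CNakayama algebras whose Kupisch series has minimal entry c+2 equals the number of balanced binary n-necklaces, which is (1/(2n)) * Σ_{k | n} φ(n/k) * binomial(2k,k), where φ is Euler's totient function. -/
/-!
Write `a i = c (i + 1) + 1 - c i` for the steps of a Kupisch series `c` on `ZMod d`. The steps
are natural numbers summing to `d`, and they determine `c` once its minimum `m + 2` is fixed, so
by stars and bars there are `C(2d - 1, d)` such series. A series fixed by the rotation by `t` is
periodic with period `gcd(n, t)`, hence is a Kupisch series on `ZMod (gcd n t)`. Burnside's lemma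
now gives `n · #orbits = ∑_{d ∣ n} φ(n/d) C(2d - 1, d)`, and `2 C(2d - 1, d) = C(2d, d)`.
-/

namespace Nak

open Finset Function

theorem sum_range_natCast_zmod {M : Type*} [AddCommMonoid M] {n : ℕ} [NeZero n]
    (f : ZMod n → M) : ∑ j ∈ range n, f j = ∑ i, f i :=
  sum_nbij' (↑) ZMod.val (fun _ _ => mem_univ _) (fun i _ => mem_range.2 (ZMod.val_lt i))
    (fun _ hj => ZMod.val_cast_of_lt (mem_range.1 hj)) (fun i _ => ZMod.natCast_zmod_val i)
    (fun _ _ => rfl)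

theorem sum_zmod_gcd_val {M : Type*} [AddCommMonoid M] (n : ℕ) [NeZero n] (f : ℕ → M) :
    ∑ t : ZMod n, f (n.gcd t.val) = ∑ d ∈ n.divisors, (n / d).totient • f d := by
  rw [← sum_range_natCast_zmod]
  calc ∑ j ∈ range n, f (n.gcd (j : ZMod n).val)
      = ∑ j ∈ range n, f (n.gcd j) :=
        sum_congr rfl fun j hj => by rw [ZMod.val_cast_of_lt (mem_range.1 hj)]
    _ = ∑ d ∈ n.divisors, ∑ j ∈ range n with n.gcd j = d, f d :=
        (sum_fiberwise_of_maps_to' (fun j _ => Nat.mem_divisors.2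
          ⟨Nat.gcd_dvd_left n j, NeZero.ne n⟩) f).symm
    _ = ∑ d ∈ n.divisors, (n / d).totient • f d :=
        sum_congr rfl fun d hd => by
          rw [sum_const, Nat.totient_div_of_dvd (Nat.dvd_of_mem_divisors hd)]

theorem card_fun_sum_eq_choose {α : Type*} [Fintype α] [DecidableEq α] (k : ℕ) :
    Nat.card {P : α → ℕ // ∑ i, P i = k} = (Fintype.card α + k - 1).choose k := by
  rw [← Nat.card_congr (Sym.equivNatSumOfFintype α k), Nat.card_eq_fintype_card,
    Sym.card_sym_eq_choose]

theorem two_mul_choose_two_mul_sub_one {d : ℕ} (hd : 0 < d) :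
    2 * (2 * d - 1).choose d = (2 * d).choose d := by
  obtain ⟨e, rfl⟩ := Nat.exists_eq_add_one_of_ne_zero hd.ne'
  rw [show 2 * (e + 1) - 1 = e + 1 + e by omega, show 2 * (e + 1) = e + 1 + e + 1 by omega,
    Nat.choose_succ_succ' (e + 1 + e) e, Nat.choose_symm_add]
  ring

theorem card_orbits_mul_card_eq_sum_card_fixedBy (G X : Type*) [AddGroup G] [Fintype G]
    [AddAction G X] [Finite X] :
    Nat.card (AddAction.orbitRel.Quotient G X) * Nat.card G =
      ∑ g : G, Nat.card (AddAction.fixedBy X g) := by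
  have := Fintype.ofFinite X
  classical
  simp only [Nat.card_eq_fintype_card]
  exact (AddAction.sum_card_fixedBy_eq_card_orbits_mul_card_addGroup G X).symm

theorem eq_of_forall_map_add_one_eq {d : ℕ} {α : Type*} {f : ZMod d → α}
    (hf : ∀ i, f (i + 1) = f i) (i j : ZMod d) : f i = f j := by
  have hper : Periodic f 1 := hf
  have hconst : ∀ i, f i = f 0 := fun i => by
    obtain ⟨k, rfl⟩ := ZMod.intCast_surjective i
    simpa using hper.zsmul_eq k
  rw [hconst i, hconst j]

theorem exists_map_add_one_eq_add {d : ℕ} [NeZero d] {M : Type*} [AddCommGroup M]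
    {a : ZMod d → M} (ha : ∑ i, a i = 0) : ∃ q : ZMod d → M, ∀ i, q (i + 1) = q i + a i := by
  refine ⟨fun i => ∑ j ∈ range i.val, a j, fun i => ?_⟩
  have hval : (i + 1).val = (i.val + 1) % d := by
    rw [← ZMod.val_natCast, Nat.cast_succ, ZMod.natCast_zmod_val]
  have hsucc : ∑ j ∈ range (i.val + 1), a j = ∑ j ∈ range i.val, a j + a i := by
    rw [sum_range_succ, ZMod.natCast_zmod_val]
  show ∑ j ∈ range (i + 1).val, a j = ∑ j ∈ range i.val, a j + a i
  obtain hlt | heq : i.val + 1 < d ∨ i.val + 1 = d := by have := ZMod.val_lt i; omega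
  · rw [hval, Nat.mod_eq_of_lt hlt, hsucc]
  · rw [hval, heq, Nat.mod_self, ← hsucc, heq, sum_range_natCast_zmod, ha, range_zero, sum_empty]

theorem _root_.Function.Periodic.natCast_gcd_val {n : ℕ} [NeZero n] {α : Type*}
    {f : ZMod n → α} {t : ZMod n} (h : Periodic f t) : Periodic f (n.gcd t.val) := by
  have hbezout : ((n.gcd t.val : ℕ) : ZMod n) = (Nat.gcdB n t.val : ZMod n) * t := by
    have := congrArg (Int.cast : ℤ → ZMod n) (Nat.gcd_eq_gcd_ab n t.val)
    push_cast [ZMod.natCast_self, ZMod.natCast_zmod_val] at this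
    rw [this]
    ring
  rw [hbezout]
  exact h.int_mul _

theorem _root_.Function.Periodic.eq_of_castHom_eq {n d : ℕ} [NeZero n] (hdn : d ∣ n)
    {α : Type*} {f : ZMod n → α} (h : Periodic f d) {x y : ZMod n}
    (hxy : ZMod.castHom hdn (ZMod d) x = ZMod.castHom hdn (ZMod d) y) : f x = f y := by
  obtain ⟨k, hk⟩ : d ∣ (x - y).val := by
    rw [← ZMod.natCast_eq_zero_iff, ZMod.natCast_val, ← ZMod.castHom_apply (h := hdn),
      map_sub, hxy, sub_self]
  have hx : x = y + k • (d : ZMod n) := by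
    rw [nsmul_eq_mul, mul_comm, ← Nat.cast_mul, ← hk, ZMod.natCast_zmod_val, add_sub_cancel]
  rw [hx, h.nsmul k y]

def IsKupischSeries {n : ℕ} (m : ℕ) (c : ZMod n → ℕ) : Prop :=
  (∀ i, 2 ≤ c i) ∧ (∀ i, c i ≤ c (i + 1) + 1) ∧ (∀ i, m + 2 ≤ c i) ∧ ∃ i, c i = m + 2

abbrev KupischSeries (n m : ℕ) : Type := {c : ZMod n → ℕ // IsKupischSeries m c}

theorem isKupischSeries_comp_iff {n d m : ℕ} {f : ZMod n → ZMod d} (hf : Surjective f)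
    (hf1 : ∀ i, f (i + 1) = f i + 1) {c : ZMod d → ℕ} :
    IsKupischSeries m (c ∘ f) ↔ IsKupischSeries m c := by
  simp only [IsKupischSeries, comp_apply, hf1]
  exact and_congr (hf.forall (p := fun j => 2 ≤ c j)).symm
    (and_congr (hf.forall (p := fun j => c j ≤ c (j + 1) + 1)).symm
      (and_congr (hf.forall (p := fun j => m + 2 ≤ c j)).symm
        (hf.exists (p := fun j => c j = m + 2)).symm))

section Steps

variable {d m : ℕ}

def steps (c : ZMod d → ℕ) (i : ZMod d) : ℕ := c (i + 1) + 1 - c i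

theorem sum_steps [NeZero d] {c : ZMod d → ℕ} (hc : ∀ i, c i ≤ c (i + 1) + 1) :
    ∑ i, steps c i = d := by
  have h : ∑ i, (steps c i + c i) = ∑ i, c i + d := by
    simp only [steps, Nat.sub_add_cancel (hc _), sum_add_distrib, sum_const, card_univ,
      ZMod.card, smul_eq_mul, mul_one]
    rw [Fintype.sum_equiv (Equiv.addRight 1) (fun i => c (i + 1)) c fun _ => rfl]
  rw [sum_add_distrib] at h
  omega

theorem eq_of_steps_eq {c c' : ZMod d → ℕ} (hc : IsKupischSeries m c)
    (hc' : IsKupischSeries m c') (h : steps c = steps c') : c = c' := by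
  obtain ⟨-, hc, hmin, i₀, hi₀⟩ := hc
  obtain ⟨-, hc', hmin', i₁, hi₁⟩ := hc'
  have hdiff : ∀ i, (c' (i + 1) : ℤ) - c (i + 1) = c' i - c i := fun i => by
    have hstep : c (i + 1) + 1 - c i = c' (i + 1) + 1 - c' i := congrFun h i
    have := hc i
    have := hc' i
    omega
  funext i
  have := eq_of_forall_map_add_one_eq (f := fun i => (c' i : ℤ) - c i) hdiff i i₀
  have := eq_of_forall_map_add_one_eq (f := fun i => (c' i : ℤ) - c i) hdiff i i₁
  have := hmin i₁
  have := hmin' i₀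
  omega

theorem exists_isKupischSeries_steps_eq [NeZero d] (m : ℕ) {a : ZMod d → ℕ}
    (ha : ∑ i, a i = d) : ∃ c, IsKupischSeries m c ∧ steps c = a := by
  obtain ⟨q, hq⟩ := exists_map_add_one_eq_add (a := fun i => (a i : ℤ) - 1)
    (by simp [sum_sub_distrib, ← Nat.cast_sum, ha, ZMod.card])
  obtain ⟨i₀, hi₀⟩ := Finite.exists_min q
  -- `q` is a potential of `a - 1`; shifted so that its minimum becomes `m + 2`, it is `c`.
  set c : ZMod d → ℕ := fun i => (q i - q i₀).toNat + (m + 2)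
  have hc : ∀ i, (c i : ℤ) = q i - q i₀ + (m + 2) := fun i => by
    simp [c, Int.toNat_of_nonneg (sub_nonneg.2 (hi₀ i))]
  refine ⟨c, ⟨fun i => by simp only [c]; omega, fun i => ?_, fun i => by simp only [c]; omega,
    i₀, by simp [c]⟩, funext fun i => ?_⟩
  · have := hc i
    have := hc (i + 1)
    have := hq i
    omega
  · have := hc i
    have := hc (i + 1)
    have := hq i
    simp only [steps]
    omega

theorem card_kupischSeries (d m : ℕ) [NeZero d] :
    Nat.card (KupischSeries d m) = (2 * d - 1).choose d := by
  have hbij : Bijective fun c : KupischSeries d m =>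
      (⟨steps c.1, sum_steps c.2.2.1⟩ : {a : ZMod d → ℕ // ∑ i, a i = d}) :=
    ⟨fun c c' h => Subtype.ext (eq_of_steps_eq c.2 c'.2 (congrArg Subtype.val h)),
      fun ⟨_, ha⟩ =>
        let ⟨c, hc, hca⟩ := exists_isKupischSeries_steps_eq m ha
        ⟨⟨c, hc⟩, Subtype.ext hca⟩⟩
  rw [Nat.card_eq_of_bijective _ hbij, card_fun_sum_eq_choose, ZMod.card, two_mul]

end Steps

theorem finite_kupischSeries (d m : ℕ) [NeZero d] : Finite (KupischSeries d m) :=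
  Nat.finite_of_card_ne_zero <| by
    rw [card_kupischSeries]
    exact (Nat.choose_pos (by have := NeZero.pos d; omega)).ne'

section Rotation

variable {n m : ℕ}

instance : AddAction (ZMod n) (KupischSeries n m) where
  vadd t c := ⟨c.1 ∘ (· + t),
    (isKupischSeries_comp_iff (add_right_surjective t) fun i => add_right_comm i 1 t).2 c.2⟩
  zero_vadd c := Subtype.ext <| funext fun i => congrArg c.1 (add_zero i)
  add_vadd s t c := Subtype.ext <| funext fun i => congrArg c.1 (add_assoc i s t).symm

theorem mem_fixedBy_iff_periodic {t : ZMod n} {c : KupischSeries n m} :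
    c ∈ AddAction.fixedBy (KupischSeries n m) t ↔ Periodic c.1 t := by
  rw [AddAction.mem_fixedBy, Subtype.ext_iff, funext_iff]
  rfl

def quotRotationEquiv :
    Quot (fun a b : KupischSeries n m => ∃ t : ZMod n, ∀ i, b.1 i = a.1 (i + t)) ≃
      AddAction.orbitRel.Quotient (ZMod n) (KupischSeries n m) :=
  Quot.congrRight fun a b => by
    rw [AddAction.orbitRel_apply, AddAction.mem_orbit_symm, AddAction.mem_orbit_iff]
    exact exists_congr fun t => by
      rw [Subtype.ext_iff, funext_iff]
      exact forall_congr' fun i => eq_comm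

theorem card_fixedBy [NeZero n] (t : ZMod n) :
    Nat.card (AddAction.fixedBy (KupischSeries n m) t) =
      (2 * n.gcd t.val - 1).choose (n.gcd t.val) := by
  set d := n.gcd t.val
  have hdn : d ∣ n := Nat.gcd_dvd_left _ _
  have : NeZero d := ⟨(Nat.gcd_pos_of_pos_left _ (NeZero.pos n)).ne'⟩
  set π := ZMod.castHom hdn (ZMod d)
  have hπ : Surjective π := ZMod.castHom_surjective hdn
  have hπ1 : ∀ i, π (i + 1) = π i + 1 := fun i => by rw [map_add, map_one]
  have hπt : π t = 0 := by
    rw [← ZMod.natCast_zmod_val t, map_natCast, ZMod.natCast_eq_zero_iff]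
    exact Nat.gcd_dvd_right _ _
  let Φ : KupischSeries d m → AddAction.fixedBy (KupischSeries n m) t := fun c =>
    ⟨⟨c.1 ∘ π, (isKupischSeries_comp_iff hπ hπ1).2 c.2⟩,
      mem_fixedBy_iff_periodic.2 fun i => by simp [hπt]⟩
  have hΦ : Bijective Φ := by
    refine ⟨fun c c' h => Subtype.ext (hπ.injective_comp_right (congrArg (·.1.1) h)), ?_⟩
    rintro ⟨⟨c, hc⟩, hct⟩
    have hfac : c = (c ∘ surjInv hπ) ∘ π := funext fun x =>
      ((mem_fixedBy_iff_periodic.1 hct).natCast_gcd_val.eq_of_castHom_eq hdn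
        (surjInv_eq hπ (π x)).symm)
    exact ⟨⟨c ∘ surjInv hπ, (isKupischSeries_comp_iff hπ hπ1).1 (hfac ▸ hc)⟩,
      Subtype.ext (Subtype.ext hfac.symm)⟩
  rw [← Nat.card_eq_of_bijective Φ hΦ, card_kupischSeries]

end Rotation

theorem card_quot_rotation_mul_two_mul (n m : ℕ) [NeZero n] :
    Nat.card (Quot fun a b : KupischSeries n m => ∃ t : ZMod n, ∀ i, b.1 i = a.1 (i + t)) *
        (2 * n) = ∑ k ∈ n.divisors, (n / k).totient * (2 * k).choose k := by
  have := finite_kupischSeries n m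
  have hburnside := card_orbits_mul_card_eq_sum_card_fixedBy (ZMod n) (KupischSeries n m)
  rw [Nat.card_zmod] at hburnside
  simp_rw [mul_left_comm, Nat.card_congr quotRotationEquiv, hburnside, card_fixedBy, mul_sum,
    sum_zmod_gcd_val n fun d => 2 * (2 * d - 1).choose d]
  exact sum_congr rfl fun d hd => by
    rw [smul_eq_mul, two_mul_choose_two_mul_sub_one (Nat.pos_of_mem_divisors hd)]

/-- For any `m ≥ 0`, the number of `n`-CNakayama algebras whose Kupisch
series (a cyclic sequence `c : ZMod n → ℕ` with `c i ≥ 2` and `c i ≤ c (i+1) + 1`,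
considered up to cyclic rotation) has minimal entry `m + 2` equals the number of balanced
binary `n`-necklaces, namely `(1/(2n)) * ∑_{k ∣ n} φ(n/k) * binomial (2k) k`. -/
theorem cnakayama_min_entry_count (n m : ℕ) (hn : 0 < n) :
    (Nat.card (Quot (fun (a b : {c : ZMod n → ℕ // (∀ i, 2 ≤ c i) ∧
          (∀ i, c i ≤ c (i + 1) + 1) ∧ (∀ i, m + 2 ≤ c i) ∧ ∃ i, c i = m + 2}) =>
        ∃ t : ZMod n, ∀ i, b.1 i = a.1 (i + t))) : ℚ) =
      (1 : ℚ) / (2 * n) *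
        ∑ k ∈ n.divisors, ((n / k).totient : ℚ) * ((2 * k).choose k : ℚ) := by
  have : NeZero n := ⟨hn.ne'⟩
  rw [one_div, ← div_eq_inv_mul, eq_div_iff (by positivity)]
  exact_mod_cast card_quot_rotation_mul_two_mul n m

end Nak
end

section
/- Let A be an n-Nakayama algebra with Kupisch series [c_0,...,c_{n-1}]. A simple non-projective module S_i has projective dimension 2 if and only if c_{i+1} + 1 = c_{i+c_i} + c_i. -/
namespace Nak

/-- Condition for `c` to be the Kupisch series of a (connected) `n`-Nakayama algebra:
entries are positive, satisfy `c i ≤ c (i+1) + 1` cyclically, and at most one vertex is a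
sink (i.e. at most one `c i = 1`; if one exists the algebra is an LNakayama algebra,
otherwise a CNakayama algebra). -/
def IsKupisch {n : ℕ} (c : ZMod n → ℕ) : Prop :=
  (∀ i, 1 ≤ c i) ∧ (∀ i, c i ≤ c (i + 1) + 1) ∧ (∀ i j, c i = 1 → c j = 1 → i = j)

/-- Condition for `c` to be the Kupisch series of an `(n+1)`-LNakayama algebra
(linear quiver with sink at vertex `n`). -/
def IsLKupisch (n : ℕ) (c : ZMod (n + 1) → ℕ) : Prop :=
  (∀ i, 1 ≤ c i) ∧ (∀ i, c i ≤ c (i + 1) + 1) ∧ c (n : ZMod (n + 1)) = 1 ∧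
    ∀ i, i ≠ (n : ZMod (n + 1)) → 2 ≤ c i

/-- The coKupisch series determined by the Kupisch series `c`:
`d i = min {k | k ≥ c (i - k)}`, the dimension of the indecomposable injective at vertex `i`. -/
noncomputable def coK {n : ℕ} (c : ZMod n → ℕ) (i : ZMod n) : ℕ :=
  sInf {k : ℕ | 1 ≤ k ∧ c (i - (k : ZMod n)) ≤ k}

/-- `PdIs c i k m` : for the Nakayama algebra with Kupisch series `c`, the indecomposable
uniserial module with top at vertex `i` and dimension `k` (with `1 ≤ k ≤ c i`) has
projective dimension `m`.  It is projective iff `k = c i`, and otherwise its first syzygy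
is the uniserial module with top `i + k` and dimension `c i - k`.  In particular
`PdIs c i 1 m` states that the simple module `S i` has projective dimension `m`. -/
inductive PdIs {n : ℕ} (c : ZMod n → ℕ) : ZMod n → ℕ → ℕ → Prop
  | proj (i : ZMod n) (k : ℕ) (h : k = c i) : PdIs c i k 0
  | step (i : ZMod n) (k m : ℕ) (h : k < c i)
      (h' : PdIs c (i + (k : ZMod n)) (c i - k) m) : PdIs c i k (m + 1)

/-- `CoSyz c s k l s' k'` : the `l`-th cosyzygy (in a minimal injective coresolution) of
the indecomposable uniserial module with socle at vertex `s` and dimension `k` is the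
uniserial module with socle `s'` and dimension `k'`.  The module is injective iff
`k = coK c s`, and otherwise its first cosyzygy has socle `s - k` and dimension
`coK c s - k`. -/
inductive CoSyz {n : ℕ} (c : ZMod n → ℕ) : ZMod n → ℕ → ℕ → ZMod n → ℕ → Prop
  | zero (s : ZMod n) (k : ℕ) : CoSyz c s k 0 s k
  | step (s : ZMod n) (k l : ℕ) (s' : ZMod n) (k' : ℕ)
      (h : CoSyz c s k l s' k') (h' : k' < coK c s') :
      CoSyz c s k (l + 1) (s' - (k' : ZMod n)) (coK c s' - k')

/-- The dimension of `Ext^l(S i, A)`: for a minimal injective coresolution of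
`A = ⊕_r e_r A`, this is the number of indecomposable projectives `e_r A` (which have
socle at vertex `r + c r - 1` and dimension `c r`) whose `l`-th cosyzygy has socle `S i`. -/
noncomputable def extDim {n : ℕ} (c : ZMod n → ℕ) (i : ZMod n) (l : ℕ) : ℕ :=
  Nat.card {r : ZMod n // ∃ m, CoSyz c (r + (c r : ZMod n) - 1) (c r) l i m}

/-- The simple module `S i` is `k`-regular: it has projective dimension `k`,
`Ext^j(S i, A) = 0` for `j < k`, and `dim Ext^k(S i, A) = 1`. -/
def IsRegular {n : ℕ} (c : ZMod n → ℕ) (k : ℕ) (i : ZMod n) : Prop :=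
  PdIs c i 1 k ∧ (∀ j < k, extDim c i j = 0) ∧ extDim c i k = 1

/-- For an `n`-Nakayama algebra with Kupisch series `c`, a simple
non-projective module `S i` has projective dimension `2` iff `c (i+1) + 1 = c (i + c i) + c i`. -/
theorem simple_pd_two_iff {n : ℕ} (hn : 0 < n) (c : ZMod n → ℕ) (hc : IsKupisch c)
    (i : ZMod n) (hnp : 2 ≤ c i) :
    PdIs c i 1 2 ↔ c (i + 1) + 1 = c (i + (c i : ZMod n)) + c i := by
  have h1 : 1 ≤ c i := le_trans one_le_two hnp
  have hcast : ((c i - 1 : ℕ) : ZMod n) = (c i : ZMod n) - 1 := by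
    push_cast [Nat.cast_sub h1]; ring
  have hvert : i + ((1 : ℕ) : ZMod n) + ((c i - 1 : ℕ) : ZMod n) = i + (c i : ZMod n) := by
    rw [hcast]; push_cast; ring
  constructor
  · intro h
    cases h with
    | step _ _ m hlt h' =>
      cases h' with
      | step _ _ m' hlt2 h'' =>
        cases h'' with
        | proj _ _ heq =>
          rw [hvert] at heq
          rw [show i + ((1:ℕ) : ZMod n) = i + 1 by push_cast; ring] at hlt2 heq
          omega
  · intro heq
    have hC : 1 ≤ c (i + (c i : ZMod n)) := hc.1 _
    have hlt2 : c i - 1 < c (i + 1) := by omega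
    have key : c (i + 1) - (c i - 1) = c (i + (c i : ZMod n)) := by omega
    have : PdIs c i 1 (1 + 1) := by
      refine PdIs.step i 1 1 (by omega) ?_
      rw [show i + ((1:ℕ) : ZMod n) = i + 1 by push_cast; ring]
      refine PdIs.step (i + 1) (c i - 1) 0 hlt2 ?_
      have hv2 : i + 1 + ((c i - 1 : ℕ) : ZMod n) = i + (c i : ZMod n) := by
        rw [hcast]; ring
      rw [hv2]
      exact PdIs.proj _ _ key
    exact this

end Nak
end

section
/- Let A be an n-Nakayama algebra with Kupisch series [c_0,...,c_{n-1}] and coKupisch series [d_0,...,d_{n-1}]. A simple non-projective module S_i is 2-regular if and only if c_i = 2, d_{i+2} = 2, c_{i+1} - c_{i+2} = 1 and d_{i+1} - d_i = 1. -/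
namespace Nak

section lemmas
variable {n : ℕ} {c : ZMod n → ℕ}

lemma c_le (h2 : ∀ i, c i ≤ c (i + 1) + 1) (j : ℕ) (x : ZMod n) :
    c x ≤ c (x + j) + j := by
  induction j with
  | zero => simp
  | succ j ih =>
      have e : x + ((j + 1 : ℕ) : ZMod n) = x + j + 1 := by push_cast; ring
      rw [e]
      have := h2 (x + j)
      omega

lemma coK_spec (hn : 0 < n) (h1 : ∀ i, 1 ≤ c i) (s : ZMod n) :
    1 ≤ coK c s ∧ c (s - (coK c s : ZMod n)) ≤ coK c s := by
  have hne : {k : ℕ | 1 ≤ k ∧ c (s - (k : ZMod n)) ≤ k}.Nonempty := by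
    refine ⟨c s * n, ?_, ?_⟩
    · exact Nat.one_le_iff_ne_zero.mpr (Nat.mul_ne_zero (by have := h1 s; omega) hn.ne')
    · have e : ((c s * n : ℕ) : ZMod n) = 0 := by push_cast [ZMod.natCast_self]; ring
      rw [e, sub_zero]
      exact Nat.le_mul_of_pos_right _ hn
  exact Nat.sInf_mem hne

lemma coK_le {s : ZMod n} {k : ℕ} (hk1 : 1 ≤ k) (hk : c (s - (k : ZMod n)) ≤ k) :
    coK c s ≤ k := Nat.sInf_le ⟨hk1, hk⟩

lemma lt_c_of_lt_coK {s : ZMod n} {k : ℕ} (hk1 : 1 ≤ k) (hk : k < coK c s) :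
    k < c (s - (k : ZMod n)) := by
  by_contra h
  push_neg at h
  exact absurd (coK_le hk1 h) (by omega)

lemma coK_add_le (hn : 0 < n) (h1 : ∀ i, 1 ≤ c i) (j : ℕ) (x : ZMod n) :
    coK c (x + j) ≤ coK c x + j := by
  induction j with
  | zero => simp
  | succ j ih =>
      have e : x + ((j + 1 : ℕ) : ZMod n) = (x + j) + 1 := by push_cast; ring
      rw [e]
      have step : coK c ((x + j) + 1) ≤ coK c (x + j) + 1 := by
        apply coK_le (by omega)
        have e2 : (x + j) + 1 - ((coK c (x + j) + 1 : ℕ) : ZMod n)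
            = (x + j) - (coK c (x + j) : ZMod n) := by push_cast; ring
        rw [e2]
        have := (coK_spec hn h1 (x + j)).2
        omega
      omega

lemma c_le_coK (hn : 0 < n) (h1 : ∀ i, 1 ≤ c i) (h2 : ∀ i, c i ≤ c (i + 1) + 1)
    (r : ZMod n) : c r ≤ coK c (r + (c r : ZMod n) - 1) := by
  set s := r + (c r : ZMod n) - 1 with hs
  by_contra h
  push_neg at h
  obtain ⟨ht1, ht2⟩ := coK_spec hn h1 s
  set t := coK c s with htdef
  have hle : t ≤ c r - 1 := by omega
  have e : s - (t : ZMod n) = r + ((c r - 1 - t : ℕ) : ZMod n) := by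
    rw [hs, Nat.cast_sub hle, Nat.cast_sub (by have := h1 r; omega)]
    push_cast
    ring
  have := c_le h2 (c r - 1 - t) r
  rw [e] at ht2
  omega

lemma coK_socle_ge (hn : 0 < n) (h1 : ∀ i, 1 ≤ c i) (h2 : ∀ i, c i ≤ c (i + 1) + 1)
    (r : ZMod n) {j : ℕ} (hj1 : 1 ≤ j) (hj : j ≤ c r - 1) :
    j < coK c (r + ((j : ℕ) : ZMod n)) := by
  have h3 := c_le_coK hn h1 h2 r
  have e : r + (c r : ZMod n) - 1 = (r + (j : ZMod n)) + ((c r - 1 - j : ℕ) : ZMod n) := by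
    rw [Nat.cast_sub hj, Nat.cast_sub (by have := h1 r; omega)]
    push_cast; ring
  rw [e] at h3
  have := coK_add_le hn h1 (c r - 1 - j) (r + (j : ZMod n))
  omega

end lemmas

section inv
variable {n : ℕ} {c : ZMod n → ℕ}

lemma cosyz_zero_iff {s s' : ZMod n} {k k' : ℕ} :
    CoSyz c s k 0 s' k' ↔ s' = s ∧ k' = k := by
  constructor
  · intro h
    cases h
    exact ⟨rfl, rfl⟩
  · rintro ⟨rfl, rfl⟩
    exact .zero _ _

lemma cosyz_one_iff {s s' : ZMod n} {k k' : ℕ} :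
    CoSyz c s k 1 s' k' ↔ k < coK c s ∧ s' = s - (k : ZMod n) ∧ k' = coK c s - k := by
  constructor
  · intro h
    cases h with
    | step a b d e f =>
        cases e
        exact ⟨f, rfl, rfl⟩
  · rintro ⟨h, rfl, rfl⟩
    exact .step _ _ _ _ _ (.zero _ _) h

lemma cosyz_two_iff {s s' : ZMod n} {k k' : ℕ} :
    CoSyz c s k 2 s' k' ↔ k < coK c s ∧ coK c s - k < coK c (s - (k : ZMod n)) ∧
      s' = s - (k : ZMod n) - ((coK c s - k : ℕ) : ZMod n) ∧
      k' = coK c (s - (k : ZMod n)) - (coK c s - k) := by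
  constructor
  · intro h
    cases h with
    | step a b d e f =>
        have e' : CoSyz c s k 1 b d := e
        rw [cosyz_one_iff] at e'
        obtain ⟨h0, rfl, rfl⟩ := e'
        exact ⟨h0, f, rfl, rfl⟩
  · rintro ⟨h0, h1, rfl, rfl⟩
    exact .step _ _ _ _ _ (cosyz_one_iff.mpr ⟨h0, rfl, rfl⟩) h1

lemma pdis_two_iff {i : ZMod n} :
    PdIs c i 1 2 ↔ 1 < c i ∧ c i - 1 < c (i + 1) ∧
      c (i + 1) - (c i - 1) = c (i + (c i : ZMod n)) := by
  constructor
  · intro h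
    cases h with
    | step _ _ _ hlt h' =>
        rw [Nat.cast_one] at h'
        cases h' with
        | step _ _ _ hlt2 h'' =>
            cases h'' with
            | proj _ _ he =>
                refine ⟨hlt, hlt2, ?_⟩
                rw [he]
                congr 1
                rw [Nat.cast_sub (by omega)]
                push_cast
                ring
  · rintro ⟨ha, hb, hd⟩
    refine .step i 1 1 ha ?_
    rw [Nat.cast_one]
    refine .step (i + 1) (c i - 1) 0 hb ?_
    refine .proj _ _ ?_
    rw [hd]
    congr 1
    rw [Nat.cast_sub (by omega)]
    push_cast
    ring

end inv

section mainLemmas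
variable {n : ℕ} {c : ZMod n → ℕ}

lemma ext0_char (hn : 0 < n) (h1 : ∀ i, 1 ≤ c i) (h2 : ∀ i, c i ≤ c (i + 1) + 1)
    (i : ZMod n) :
    (∀ r : ZMod n, r + (c r : ZMod n) - 1 ≠ i) ↔ coK c (i + 1) = coK c i + 1 := by
  constructor
  · intro hall
    have hle : coK c (i + 1) ≤ coK c i + 1 := by
      have := coK_add_le hn h1 1 i
      rwa [Nat.cast_one] at this
    by_contra hne
    have ht : coK c (i + 1) ≤ coK c i := by omega
    obtain ⟨ht1, ht2⟩ := coK_spec hn h1 (i + 1)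
    rcases Nat.lt_or_ge (coK c (i + 1)) 2 with h | h
    · -- t = 1 : c i = 1, take r = i
      have hti : coK c (i + 1) = 1 := by omega
      rw [hti, Nat.cast_one, add_sub_cancel_right] at ht2
      apply hall i
      have : c i = 1 := by have := h1 i; omega
      rw [this, Nat.cast_one, add_sub_cancel_right]
    · -- t ≥ 2 : c (i + 1 - t) = t, take r = i + 1 - t
      have hmin := lt_c_of_lt_coK (c := c) (s := i) (k := coK c (i + 1) - 1)
        (by omega) (by omega)
      have e : i - ((coK c (i + 1) - 1 : ℕ) : ZMod n)
          = i + 1 - ((coK c (i + 1) : ℕ) : ZMod n) := by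
        rw [Nat.cast_sub (by omega)]; push_cast; ring
      rw [e] at hmin
      have hceq : c (i + 1 - ((coK c (i + 1) : ℕ) : ZMod n)) = coK c (i + 1) := by omega
      apply hall (i + 1 - ((coK c (i + 1) : ℕ) : ZMod n))
      rw [hceq]; ring
  · intro hd r hr
    set k := c r with hk
    have hck : c (i + 1 - (k : ZMod n)) = k := by
      have e : i + 1 - (k : ZMod n) = r := by rw [← hr]; push_cast; ring
      rw [e]
    rcases le_or_gt k (coK c i) with h | h
    · have : coK c (i + 1) ≤ k := coK_le (h1 r) (by rw [hck])
      omega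
    · -- impossible: c (i - coK c i) ≥ coK c i + 1
      obtain ⟨ht1, ht2⟩ := coK_spec hn h1 i
      have hcle := c_le h2 (k - (coK c i + 1)) (i + 1 - (k : ZMod n))
      have e : i + 1 - (k : ZMod n) + ((k - (coK c i + 1) : ℕ) : ZMod n)
          = i - ((coK c i : ℕ) : ZMod n) := by
        rw [Nat.cast_sub (by omega)]; push_cast; ring
      rw [e, hck] at hcle
      omega

lemma extDim_zero_iff (hn : 0 < n) {i : ZMod n} {l : ℕ} :
    extDim c i l = 0 ↔
      ∀ r : ZMod n, ¬ ∃ m, CoSyz c (r + (c r : ZMod n) - 1) (c r) l i m := by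
  haveI : NeZero n := ⟨hn.ne'⟩
  unfold extDim
  constructor
  · intro h r hr
    haveI : Nonempty {r : ZMod n // ∃ m, CoSyz c (r + (c r : ZMod n) - 1) (c r) l i m} :=
      ⟨⟨r, hr⟩⟩
    have := Nat.card_pos
      (α := {r : ZMod n // ∃ m, CoSyz c (r + (c r : ZMod n) - 1) (c r) l i m})
    omega
  · intro h
    haveI : IsEmpty {r : ZMod n // ∃ m, CoSyz c (r + (c r : ZMod n) - 1) (c r) l i m} :=
      ⟨fun x => h x.1 x.2⟩
    simp [Nat.card_eq_zero]

lemma extDim_one_iff (hn : 0 < n) {i : ZMod n} {l : ℕ} :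
    extDim c i l = 1 ↔
      (∃ r : ZMod n, ∃ m, CoSyz c (r + (c r : ZMod n) - 1) (c r) l i m) ∧
      ∀ r r' : ZMod n, (∃ m, CoSyz c (r + (c r : ZMod n) - 1) (c r) l i m) →
        (∃ m, CoSyz c (r' + (c r' : ZMod n) - 1) (c r') l i m) → r = r' := by
  haveI : NeZero n := ⟨hn.ne'⟩
  unfold extDim
  rw [Nat.card_eq_one_iff_unique]
  constructor
  · rintro ⟨hs, ⟨⟨r, hr⟩⟩⟩
    refine ⟨⟨r, hr⟩, fun a b ha hb => ?_⟩
    have := hs.allEq ⟨a, ha⟩ ⟨b, hb⟩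
    exact congrArg Subtype.val this
  · rintro ⟨⟨r, hr⟩, huniq⟩
    exact ⟨⟨fun a b => Subtype.ext (huniq a.1 b.1 a.2 b.2)⟩, ⟨⟨r, hr⟩⟩⟩

lemma mem2_of_k (hn : 0 < n) (h1 : ∀ i, 1 ≤ c i)
    {i : ZMod n} (hC : coK c (i + (c (i + 1) : ZMod n)) = c (i + 1)) {k : ℕ}
    (hk1 : 1 ≤ k) (hkc : c (i + 1 + (k : ZMod n)) + k = c (i + 1))
    (hkd : k < coK c (i + (k : ZMod n))) :
    ∃ m, CoSyz c ((i + 1 + (k : ZMod n)) + (c (i + 1 + (k : ZMod n)) : ZMod n) - 1)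
      (c (i + 1 + (k : ZMod n))) 2 i m := by
  set p := c (i + 1) with hp
  set r := i + 1 + (k : ZMod n) with hr
  have hcr : c r + k = p := hkc
  have hkp : k < p := by have := h1 r; omega
  have hs0 : r + (c r : ZMod n) - 1 = i + (p : ZMod n) := by
    rw [hr]
    have : ((c r : ℕ) : ZMod n) = (p : ZMod n) - (k : ZMod n) := by
      rw [← hcr]; push_cast; ring
    rw [this]; ring
  refine ⟨coK c (i + (k : ZMod n)) - k, ?_⟩
  rw [cosyz_two_iff, hs0, hC]
  have e1 : i + (p : ZMod n) - ((c r : ℕ) : ZMod n) = i + (k : ZMod n) := by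
    have : ((c r : ℕ) : ZMod n) = (p : ZMod n) - (k : ZMod n) := by
      rw [← hcr]; push_cast; ring
    rw [this]; ring
  rw [e1]
  refine ⟨by omega, ?_, ?_, by rw [show p - c r = k by omega]⟩
  · rw [show p - c r = k by omega]
    exact hkd
  · rw [show p - c r = k by omega]
    ring

lemma mem2_to_k (hn : 0 < n) (h1 : ∀ i, 1 ≤ c i) (h2 : ∀ i, c i ≤ c (i + 1) + 1)
    {i r : ZMod n}
    (h : ∃ m, CoSyz c (r + (c r : ZMod n) - 1) (c r) 2 i m) :
    ∃ k : ℕ, 1 ≤ k ∧ r = i + 1 + (k : ZMod n) ∧ c r + k = c (i + 1) ∧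
      k < coK c (i + (k : ZMod n)) ∧
      coK c (i + (c (i + 1) : ZMod n)) = c (i + 1) := by
  obtain ⟨m, hm⟩ := h
  rw [cosyz_two_iff] at hm
  set s0 := r + (c r : ZMod n) - 1 with hs0
  obtain ⟨hA, hB, hi, -⟩ := hm
  set k := coK c s0 - c r with hkdef
  have hk1 : 1 ≤ k := by omega
  have hds0 : coK c s0 = c r + k := by omega
  -- r = i + 1 + k
  have hrk : r = i + 1 + (k : ZMod n) := by
    rw [hi, hs0]; push_cast; ring
  -- upper bound: c (i+1) ≤ c r + k
  have hup : c (i + 1) ≤ c r + k := by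
    have := c_le h2 k (i + 1)
    rw [← hrk] at this
    omega
  -- lower bound via minimality of coK c s0 at j = c r + k - 1
  have hlow : c r + k - 1 < c (i + 1) := by
    have hmin := lt_c_of_lt_coK (c := c) (s := s0) (k := c r + k - 1)
      (by have := h1 r; omega) (by omega)
    have e : s0 - ((c r + k - 1 : ℕ) : ZMod n) = i + 1 := by
      rw [hs0, Nat.cast_sub (by have := h1 r; omega)]
      rw [hrk]; push_cast; ring
    rwa [e] at hmin
  have hck : c r + k = c (i + 1) := by omega
  -- socle index for second condition
  have e2 : s0 - ((c r : ℕ) : ZMod n) = i + (k : ZMod n) := by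
    rw [hs0, hrk]; push_cast; ring
  rw [e2] at hB
  -- coK at i + c(i+1)
  have e3 : s0 = i + ((c (i + 1) : ℕ) : ZMod n) := by
    have hcast : ((c (i + 1) : ℕ) : ZMod n) = ((c r : ℕ) : ZMod n) + (k : ZMod n) := by
      rw [← hck]; push_cast; ring
    rw [hs0, hcast, hrk]; ring
  refine ⟨k, hk1, hrk, hck, by omega, ?_⟩
  rw [← e3, hds0, hck]

end mainLemmas


/-- For an `n`-Nakayama algebra with Kupisch series `c` and coKupisch
series `d = coK c`, a simple non-projective module `S i` is `2`-regular iff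
`c i = 2`, `d (i+2) = 2`, `c (i+1) - c (i+2) = 1` and `d (i+1) - d i = 1`. -/
theorem two_regular_iff {n : ℕ} (hn : 0 < n) (c : ZMod n → ℕ) (hc : IsKupisch c)
    (i : ZMod n) (hnp : 2 ≤ c i) :
    IsRegular c 2 i ↔
      c i = 2 ∧ coK c (i + 2) = 2 ∧ (c (i + 1) : ℤ) - c (i + 2) = 1 ∧
        (coK c (i + 1) : ℤ) - coK c i = 1 := by
  obtain ⟨h1, h2, -⟩ := hc
  have cast2 : ((2 : ℕ) : ZMod n) = 2 := by push_cast; ring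
  constructor
  · rintro ⟨hpd, hj, hext2⟩
    have hext0 := (extDim_zero_iff hn).mp (hj 0 (by norm_num))
    have hext1 := (extDim_zero_iff hn).mp (hj 1 (by norm_num))
    -- d (i+1) = d i + 1
    have hd1 : coK c (i + 1) = coK c i + 1 := by
      apply (ext0_char hn h1 h2 i).mp
      intro r hr
      apply hext0 r
      refine ⟨c r, ?_⟩
      rw [hr]
      exact CoSyz.zero _ _
    rw [pdis_two_iff] at hpd
    obtain ⟨hm1, hm2, hm3⟩ := hpd
    -- hC : coK c (i + p) = p
    have hL3 : c (i + 1) ≤ coK c (i + ((c (i + 1) : ℕ) : ZMod n)) := by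
      have h3 := c_le_coK hn h1 h2 (i + 1)
      have e : i + 1 + ((c (i + 1) : ℕ) : ZMod n) - 1 = i + ((c (i + 1) : ℕ) : ZMod n) := by
        ring
      rwa [e] at h3
    have hC : coK c (i + ((c (i + 1) : ℕ) : ZMod n)) = c (i + 1) := by
      rcases Nat.lt_or_ge (c (i + 1)) (coK c (i + ((c (i + 1) : ℕ) : ZMod n))) with h | h
      · exfalso
        apply hext1 (i + 1)
        refine ⟨_, cosyz_one_iff.mpr ⟨?_, ?_, rfl⟩⟩
        · have e : i + 1 + ((c (i + 1) : ℕ) : ZMod n) - 1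
              = i + ((c (i + 1) : ℕ) : ZMod n) := by ring
          rw [e]; exact h
        · ring
      · omega
    -- every 1 ≤ k ≤ c i - 1 contributes to Ext^2
    have hkmem : ∀ k, 1 ≤ k → k ≤ c i - 1 →
        c (i + 1 + (k : ZMod n)) + k = c (i + 1) ∧ k < coK c (i + (k : ZMod n)) := by
      intro k hk1 hkm
      constructor
      · have hup : c (i + 1 + (k : ZMod n)) ≤ c (i + 1) - k := by
          have hle := c_le h2 (c i - 1 - k) (i + 1 + (k : ZMod n))
          have e : i + 1 + (k : ZMod n) + ((c i - 1 - k : ℕ) : ZMod n)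
              = i + ((c i : ℕ) : ZMod n) := by
            rw [Nat.cast_sub (by omega), Nat.cast_sub (by omega)]
            push_cast; ring
          rw [e, ← hm3] at hle
          omega
        have hlo : c (i + 1) - k ≤ c (i + 1 + (k : ZMod n)) := by
          rcases le_or_gt (c (i + 1)) (k + 1) with h | h
          · have := h1 (i + 1 + (k : ZMod n)); omega
          · have hmin := lt_c_of_lt_coK (c := c)
              (s := i + ((c (i + 1) : ℕ) : ZMod n)) (k := c (i + 1) - 1 - k)
              (by omega) (by rw [hC]; omega)
            have e : i + ((c (i + 1) : ℕ) : ZMod n) - ((c (i + 1) - 1 - k : ℕ) : ZMod n)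
                = i + 1 + (k : ZMod n) := by
              rw [Nat.cast_sub (by omega), Nat.cast_sub (by omega)]
              push_cast; ring
            rw [e] at hmin
            omega
        omega
      · exact coK_socle_ge hn h1 h2 i hk1 hkm
    -- c i = 2
    have hci : c i = 2 := by
      by_contra hne
      have hm3' : 3 ≤ c i := by omega
      obtain ⟨hka, hkb⟩ := hkmem 1 le_rfl (by omega)
      obtain ⟨hka', hkb'⟩ := hkmem (c i - 1) (by omega) le_rfl
      rw [extDim_one_iff hn] at hext2
      have heq := hext2.2 (i + 1 + ((1 : ℕ) : ZMod n)) (i + 1 + ((c i - 1 : ℕ) : ZMod n))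
        (mem2_of_k hn h1 hC le_rfl hka hkb)
        (mem2_of_k hn h1 hC (by omega) hka' hkb')
      have hceq : c (i + 1 + ((1 : ℕ) : ZMod n)) = c (i + 1 + ((c i - 1 : ℕ) : ZMod n)) := by
        rw [heq]
      omega
    refine ⟨hci, ?_, ?_, by push_cast; omega⟩
    · -- coK c (i+2) = 2
      have hle : coK c (i + 2) ≤ 2 := by
        apply coK_le (by omega)
        have e : i + 2 - ((2 : ℕ) : ZMod n) = i := by rw [cast2]; ring
        rw [e, hci]
      have hp2 : 2 ≤ c (i + 1) := by omega
      obtain ⟨ha, hb⟩ := coK_spec hn h1 (i + 2)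
      rcases Nat.lt_or_ge (coK c (i + 2)) 2 with h | h
      · exfalso
        have h1' : coK c (i + 2) = 1 := by omega
        rw [h1', Nat.cast_one] at hb
        have e : i + 2 - 1 = i + 1 := by ring
        rw [e] at hb
        omega
      · omega
    · -- c (i+1) - c (i+2) = 1
      have e : i + ((c i : ℕ) : ZMod n) = i + 2 := by rw [hci, cast2]
      rw [e] at hm3
      rw [hci] at hm3
      have := h1 (i + 2)
      push_cast
      omega
  · rintro ⟨hc2, hd2, h3', h4'⟩
    have h3 : c (i + 1) = c (i + 2) + 1 := by omega
    have h4 : coK c (i + 1) = coK c i + 1 := by omega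
    have hp2 : 2 ≤ c (i + 1) := by have := h1 (i + 2); omega
    have hC : coK c (i + ((c (i + 1) : ℕ) : ZMod n)) = c (i + 1) := by
      have hge : c (i + 1) ≤ coK c (i + ((c (i + 1) : ℕ) : ZMod n)) := by
        have h3' := c_le_coK hn h1 h2 (i + 1)
        have e : i + 1 + ((c (i + 1) : ℕ) : ZMod n) - 1
            = i + ((c (i + 1) : ℕ) : ZMod n) := by ring
        rwa [e] at h3'
      have hle : coK c (i + ((c (i + 1) : ℕ) : ZMod n)) ≤ c (i + 1) := by
        apply coK_le (by omega)
        have e : i + ((c (i + 1) : ℕ) : ZMod n) - ((c (i + 1) : ℕ) : ZMod n) = i := by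
          ring
        rw [e, hc2]
        omega
      omega
    refine ⟨?_, ?_, ?_⟩
    · rw [pdis_two_iff]
      refine ⟨by omega, by omega, ?_⟩
      rw [hc2, cast2]
      omega
    · intro j hj
      interval_cases j
      · rw [extDim_zero_iff hn]
        intro r ⟨m, hm⟩
        rw [cosyz_zero_iff] at hm
        exact (ext0_char hn h1 h2 i).mpr h4 r hm.1.symm
      · rw [extDim_zero_iff hn]
        intro r ⟨m, hm⟩
        rw [cosyz_one_iff] at hm
        obtain ⟨hlt, hi, -⟩ := hm
        have hr : r = i + 1 := by rw [hi]; ring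
        rw [hr] at hlt
        have e : i + 1 + ((c (i + 1) : ℕ) : ZMod n) - 1
            = i + ((c (i + 1) : ℕ) : ZMod n) := by ring
        rw [e, hC] at hlt
        omega
    · rw [extDim_one_iff hn]
      constructor
      · refine ⟨i + 1 + ((1 : ℕ) : ZMod n), mem2_of_k hn h1 hC le_rfl ?_ ?_⟩
        · have e : i + 1 + ((1 : ℕ) : ZMod n) = i + 2 := by push_cast; ring
          rw [e]
          omega
        · rw [Nat.cast_one, h4]
          have := (coK_spec hn h1 i).1
          omega
      · intro r r' hr hr'
        obtain ⟨k, hk1, hrk, hck, hkd, -⟩ := mem2_to_k hn h1 h2 hr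
        obtain ⟨k', hk1', hrk', hck', hkd', -⟩ := mem2_to_k hn h1 h2 hr'
        have hkone : ∀ k0 : ℕ, 1 ≤ k0 → k0 < coK c (i + (k0 : ZMod n)) → k0 = 1 := by
          intro k0 hk01 hk0d
          by_contra hne
          have hk02 : 2 ≤ k0 := by omega
          have hle := coK_add_le hn h1 (k0 - 2) (i + 2)
          have e : i + 2 + ((k0 - 2 : ℕ) : ZMod n) = i + (k0 : ZMod n) := by
            rw [Nat.cast_sub (by omega)]
            push_cast; ring
          rw [e, hd2] at hle
          omega
        rw [hrk, hrk', hkone k hk1 hkd, hkone k' hk1' hkd']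


end Nak
end

section
/- A Dyck path of semilength n has at most ⌊n/2⌋ hills of size 2 (2-hills), and this bound is attained. Consequently, an (n+1)-LNakayama algebra has at most ⌊n/2⌋ 2-regular simple modules and hence at most 2^{⌊n/2⌋} exact structures on the category of finitely generated projective modules, and these bounds are sharp. -/
namespace Nak

/-- `p` is a Dyck path of semilength `n`: a list of `2n` steps (`true` = horizontal,
`false` = vertical) with `n` horizontal steps, never going below the diagonal. -/
def IsDyck (n : ℕ) (p : List Bool) : Prop :=
  p.length = 2 * n ∧ p.count true = n ∧
    ∀ i ≤ 2 * n, (p.take i).count false ≤ (p.take i).count true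

/-- The path `p` touches the main diagonal after `i` steps. -/
def balancedAt (p : List Bool) (i : ℕ) : Prop :=
  (p.take i).count true = (p.take i).count false

/-- Number of peaks: horizontal steps immediately followed by a vertical step. -/
noncomputable def numPeaks (p : List Bool) : ℕ :=
  Nat.card {i : ℕ // p[i]? = some true ∧ p[i + 1]? = some false}

/-- Number of returns (vertical steps ending on the main diagonal) which are not
1-hills (i.e. not immediately preceded by a horizontal step starting on the diagonal). -/
noncomputable def numReturnsNotOneHill (p : List Bool) : ℕ :=
  Nat.card {i : ℕ // p[i]? = some false ∧ balancedAt p (i + 1) ∧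
    ¬(1 ≤ i ∧ p[i - 1]? = some true ∧ balancedAt p (i - 1))}

/-- Number of 1-rises: horizontal steps neither preceded nor followed by a horizontal step. -/
noncomputable def numOneRises (p : List Bool) : ℕ :=
  Nat.card {i : ℕ // p[i]? = some true ∧ (i = 0 ∨ p[i - 1]? = some false) ∧
    p[i + 1]? ≠ some true}

/-- Number of 2-hills: two consecutive horizontal steps starting on the main diagonal
immediately followed by two consecutive vertical steps. -/
noncomputable def numTwoHills (p : List Bool) : ℕ :=
  Nat.card {i : ℕ // balancedAt p i ∧ p[i]? = some true ∧ p[i + 1]? = some true ∧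
    p[i + 2]? = some false ∧ p[i + 3]? = some false}

/-- Number of valleys (a vertical step followed by a horizontal step) not on the main
diagonal. -/
noncomputable def numOffDiagValleys (p : List Bool) : ℕ :=
  Nat.card {i : ℕ // p[i]? = some false ∧ p[i + 1]? = some true ∧ ¬balancedAt p (i + 1)}

/-- The Dyck path has height at most 2, i.e. all entries of its area sequence are at
most 3: the path never rises more than 2 above the main diagonal. -/
def HeightLE2 (p : List Bool) : Prop :=
  ∀ i ≤ p.length, (p.take i).count true ≤ (p.take i).count false + 2

/-!
Two 2-hills cannot overlap, so their starting positions are at least four steps apart, and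
they all start no later than step `2n - 4`.

If the simple module `S i` of an LNakayama algebra has projective dimension two, the Kupisch
series drops by exactly one along `i + 1, …, i + c i`. Consequently every projective `e_{i+t} A`
with `2 ≤ t ≤ c i` has `S i` as socle of its second cosyzygy, so `dim Ext²(S i, A) = 1` forces
`c i = 2`. Then `e_i A` has socle `S (i + 1)`, so `S (i + 1)` is not 2-regular. The 2-regular
vertices therefore lie in `0, …, n - 2` with no two adjacent.

Both bounds are attained: by the path `(RRUU)^⌊n/2⌋ (RU)^(n mod 2)`, and by the Kupisch series
`2, 3, 2, 3, …` (ending in `…, 2, 1`), whose 2-regular simples are the even vertices below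
`n - 1`. Exact structures correspond to subsets of the 2-regular simples.
-/

open Function

theorem card_le_div_of_spaced {α : Type*} {f : α → ℕ} {d L : ℕ} (hd : 0 < d)
    (hf : Injective f) (hle : ∀ a, f a + d ≤ L) (hsep : ∀ a b, f a < f b → f a + d ≤ f b) :
    Nat.card α ≤ L / d := by
  have hdiv : ∀ {x y}, x + d ≤ y → x / d < y / d := fun h =>
    (Nat.add_div_right _ hd ▸ Nat.div_le_div_right h : _ + 1 ≤ _)
  have hinj : Injective fun a => (⟨f a / d, hdiv (hle a)⟩ : Fin (L / d)) := by
    intro a b hab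
    simp only [Fin.mk.injEq] at hab
    refine hf (by_contra fun hne => ?_)
    rcases Nat.lt_or_gt_of_ne hne with h | h
    · exact (hdiv (hsep a b h)).ne hab
    · exact (hdiv (hsep b a h)).ne' hab
  simpa using Nat.card_le_card_of_injective _ hinj

theorem card_set_eq_two_pow {α : Type*} [Finite α] : Nat.card (Set α) = 2 ^ Nat.card α := by
  have := Fintype.ofFinite α
  classical
  simp [Nat.card_eq_fintype_card, Fintype.card_set]

section Dyck

def IsTwoHill (p : List Bool) (i : ℕ) : Prop :=
  balancedAt p i ∧ p[i]? = some true ∧ p[i + 1]? = some true ∧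
    p[i + 2]? = some false ∧ p[i + 3]? = some false

variable {p : List Bool} {i j : ℕ}

theorem IsTwoHill.add_four_le_length (h : IsTwoHill p i) : i + 4 ≤ p.length :=
  (List.getElem?_eq_some_iff.mp h.2.2.2.2).1

theorem IsTwoHill.add_four_le (hi : IsTwoHill p i) (hj : IsTwoHill p j) (hij : i < j) :
    i + 4 ≤ j := by
  obtain ⟨-, -, hi1, hi2, hi3⟩ := hi
  obtain ⟨-, hj0, hj1, -, -⟩ := hj
  by_contra! h
  obtain rfl | rfl | rfl : j = i + 1 ∨ j = i + 2 ∨ j = i + 3 := by omega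
  · simp_all
  · simp_all
  · simp_all

instance (p : List Bool) : Finite {i // IsTwoHill p i} :=
  ((Set.finite_lt_nat p.length).subset fun _ h => by
    have := IsTwoHill.add_four_le_length h
    simp only [Set.mem_ofPred_eq]; omega).to_subtype

theorem numTwoHills_le_of_isDyck {n : ℕ} (h : IsDyck n p) : numTwoHills p ≤ n / 2 := by
  have := card_le_div_of_spaced (f := fun i : {i // IsTwoHill p i} => i.1) (L := 2 * n)
    (by norm_num) Subtype.val_injective
    (fun i => h.1 ▸ i.2.add_four_le_length) (fun i j hij => i.2.add_four_le j.2 hij)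
  exact this.trans_eq (by omega)

theorem IsDyck.count_false_eq {n : ℕ} (h : IsDyck n p) : p.count false = n := by
  have := List.count_true_add_count_false p
  have := h.1
  have := h.2.1
  omega

theorem IsDyck.append {a b : ℕ} {q : List Bool} (hp : IsDyck a p) (hq : IsDyck b q) :
    IsDyck (a + b) (p ++ q) := by
  have hpf := hp.count_false_eq
  obtain ⟨hpl, hpt, hpre⟩ := hp
  obtain ⟨hql, hqt, hqre⟩ := hq
  refine ⟨by simp [hpl, hql]; ring, by simp [hpt, hqt], fun i hi => ?_⟩
  rw [List.take_append, List.count_append, List.count_append]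
  rcases le_or_gt i (2 * a) with h | h
  · simp [hpl, Nat.sub_eq_zero_of_le h, hpre i h]
  · rw [List.take_of_length_le (by omega)]
    have := hqre (i - p.length) (by omega)
    omega

theorem isTwoHill_append_iff {b q : List Bool} (hb : balancedAt b b.length) (i : ℕ) :
    IsTwoHill (b ++ q) (b.length + i) ↔ IsTwoHill q i := by
  have hget : ∀ j, (b ++ q)[b.length + j]? = q[j]? := fun j => by
    rw [List.getElem?_append_right (by omega), Nat.add_sub_cancel_left]
  have hbal : balancedAt (b ++ q) (b.length + i) ↔ balancedAt q i := by
    unfold balancedAt at hb ⊢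
    rw [List.take_length] at hb
    rw [List.take_append, List.take_of_length_le (by omega), Nat.add_sub_cancel_left,
      List.count_append, List.count_append]
    omega
  simp only [IsTwoHill, hbal, Nat.add_assoc, hget]

def twoHillPath : ℕ → List Bool
  | 0 => []
  | 1 => [true, false]
  | n + 2 => [true, true, false, false] ++ twoHillPath n

theorem isDyck_twoHillPath : ∀ n, IsDyck n (twoHillPath n)
  | 0 => ⟨rfl, rfl, by decide⟩
  | 1 => ⟨rfl, rfl, by decide⟩
  | n + 2 => by
    have := IsDyck.append (a := 2) (p := [true, true, false, false]) ⟨rfl, rfl, by decide⟩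
      (isDyck_twoHillPath n)
    rwa [Nat.add_comm] at this

theorem isTwoHill_twoHillPath : ∀ n k, k < n / 2 → IsTwoHill (twoHillPath n) (4 * k)
  | 0, _, hk | 1, _, hk => by omega
  | n + 2, 0, _ => by simp [twoHillPath, IsTwoHill, balancedAt]
  | n + 2, k + 1, hk => by
    rw [Nat.mul_succ, Nat.add_comm (4 * k)]
    exact (isTwoHill_append_iff (b := [true, true, false, false]) rfl _).mpr
      (isTwoHill_twoHillPath n k (by omega))

theorem numTwoHills_twoHillPath (n : ℕ) : numTwoHills (twoHillPath n) = n / 2 := by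
  refine (numTwoHills_le_of_isDyck (isDyck_twoHillPath n)).antisymm ?_
  change _ ≤ Nat.card {i // IsTwoHill (twoHillPath n) i}
  have hinj : Injective fun k : Fin (n / 2) =>
      (⟨4 * k, isTwoHill_twoHillPath n k k.2⟩ : {i // IsTwoHill (twoHillPath n) i}) :=
    fun a b h => Fin.ext (by simpa using congrArg Subtype.val h)
  simpa using Nat.card_le_card_of_injective _ hinj

end Dyck

section Nakayama

variable {m : ℕ} {c : ZMod m → ℕ}

theorem pdIs_zero_iff {i : ZMod m} {k : ℕ} : PdIs c i k 0 ↔ k = c i :=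
  ⟨by rintro ⟨⟩; assumption, PdIs.proj i k⟩

theorem pdIs_succ_iff {i : ZMod m} {k l : ℕ} :
    PdIs c i k (l + 1) ↔ k < c i ∧ PdIs c (i + k) (c i - k) l :=
  ⟨by rintro ⟨⟩; exact ⟨‹_›, ‹_›⟩, fun h => .step i k l h.1 h.2⟩

theorem pdIs_simple_two_iff {i : ZMod m} :
    PdIs c i 1 2 ↔ 2 ≤ c i ∧ c i ≤ c (i + 1) ∧ c (i + c i) + c i = c (i + 1) + 1 := by
  simp only [pdIs_succ_iff, pdIs_zero_iff, Nat.cast_one]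
  constructor <;> rintro ⟨h1, h2, h3⟩ <;>
  · have hcast : i + 1 + ((c i - 1 : ℕ) : ZMod m) = i + c i := by
      rw [Nat.cast_sub (by omega)]; ring
    simp only [hcast] at h3 ⊢
    omega

theorem coSyz_zero_iff {s s' : ZMod m} {k k' : ℕ} :
    CoSyz c s k 0 s' k' ↔ s' = s ∧ k' = k :=
  ⟨by rintro ⟨⟩; exact ⟨rfl, rfl⟩, by rintro ⟨rfl, rfl⟩; exact .zero _ _⟩

theorem coSyz_succ_iff {s s' : ZMod m} {k k' l : ℕ} :
    CoSyz c s k (l + 1) s' k' ↔ ∃ s₁ k₁, CoSyz c s k l s₁ k₁ ∧ k₁ < coK c s₁ ∧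
      s' = s₁ - k₁ ∧ k' = coK c s₁ - k₁ :=
  ⟨by rintro ⟨⟩; exact ⟨_, _, ‹_›, ‹_›, rfl, rfl⟩,
    by rintro ⟨s₁, k₁, h, hlt, rfl, rfl⟩; exact .step s k l s₁ k₁ h hlt⟩

theorem coK_eq_of_isLeast {s : ZMod m} {b : ℕ} (hb : 1 ≤ b) (hcb : c (s - b) ≤ b)
    (hmin : ∀ j, 1 ≤ j → j < b → j < c (s - j)) : coK c s = b :=
  IsLeast.csInf_eq ⟨⟨hb, hcb⟩, fun j ⟨hj, hcj⟩ => by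
    by_contra! hjb
    exact (hmin j hj hjb).not_ge hcj⟩

theorem lt_coK [NeZero m] {v : ZMod m} (hv : c v = 1) {s : ZMod m} {k : ℕ}
    (h : ∀ j, 1 ≤ j → j ≤ k → j < c (s - j)) : k < coK c s := by
  have hmem : coK c s ∈ {k : ℕ | 1 ≤ k ∧ c (s - k) ≤ k} := by
    have : 1 ≤ m := NeZero.one_le
    exact Nat.sInf_mem ⟨m + (s - v).val, by simp [hv]; omega⟩
  by_contra! hle
  exact (h _ hmem.1 hle).not_ge hmem.2

theorem apply_le_apply_add_add (hc : ∀ i, c i ≤ c (i + 1) + 1) (s : ℕ) (i : ZMod m) :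
    c i ≤ c (i + s) + s := by
  induction s generalizing i with
  | zero => simp
  | succ s ih =>
    have := ih (i + 1)
    rw [show i + 1 + (s : ZMod m) = i + (s + 1 : ℕ) by push_cast; ring] at this
    have := hc i
    omega

theorem apply_add_add_eq_of_pdIs_two (hc : ∀ i, c i ≤ c (i + 1) + 1) {i : ZMod m}
    (h : PdIs c i 1 2) {u : ℕ} (hu : 1 ≤ u) (huc : u ≤ c i) :
    c (i + u) + u = c (i + 1) + 1 := by
  obtain ⟨-, -, hend⟩ := pdIs_simple_two_iff.mp h
  have hlow := apply_le_apply_add_add hc (u - 1) (i + 1)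
  have hup := apply_le_apply_add_add hc (c i - u) (i + u)
  rw [show i + 1 + ((u - 1 : ℕ) : ZMod m) = i + u by rw [Nat.cast_sub hu]; push_cast; ring]
    at hlow
  rw [add_assoc, ← Nat.cast_add, Nat.add_sub_cancel' huc] at hup
  omega

theorem exists_coSyz_two_of_pdIs_two [NeZero m] (hc : ∀ i, c i ≤ c (i + 1) + 1) {v : ZMod m}
    (hv : c v = 1) {i : ZMod m} (h : PdIs c i 1 2) {t : ℕ} (ht : 2 ≤ t) (htc : t ≤ c i) :
    ∃ k, CoSyz c (i + t + c (i + t) - 1) (c (i + t)) 2 i k := by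
  obtain ⟨-, hmono, hend⟩ := pdIs_simple_two_iff.mp h
  have hstair {u : ℕ} := apply_add_add_eq_of_pdIs_two hc h (u := u)
  set b := c (i + 1)
  have hct : c (i + t) + t = b + 1 := hstair (by omega) htc
  -- `e_{i+t} A` embeds into the injective at `i + b`, of length `b`; the cokernel has socle
  -- `i + (t - 1)` and length `t - 1`, and its injective envelope is longer than that.
  have hsocle : i + t + c (i + t) - 1 = i + b := by
    have : ((c (i + t) + t : ℕ) : ZMod m) = b + 1 := by rw [hct]; push_cast; ring
    push_cast at this
    linear_combination this
  have hcoK : coK c (i + b) = b := by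
    refine coK_eq_of_isLeast (by omega) (by simpa using hmono) fun j hj hjb => ?_
    rw [show i + b - j = i + ((b - j : ℕ) : ZMod m) by rw [Nat.cast_sub hjb.le]; ring]
    rcases le_or_gt (b - j) (c i) with hle | hlt
    · have := hstair (u := b - j) (by omega) hle
      omega
    · have := apply_le_apply_add_add hc (b - j - c i) (i + c i)
      rw [add_assoc, ← Nat.cast_add, Nat.add_sub_cancel' hlt.le] at this
      omega
  have hcoK' : t - 1 < coK c (i + (t - 1 : ℕ)) := by
    refine lt_coK hv fun j hj hjt => ?_
    rw [show i + ((t - 1 : ℕ) : ZMod m) - j = i + ((t - 1 - j : ℕ) : ZMod m) by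
      rw [Nat.cast_sub hjt]; ring]
    rcases Nat.eq_zero_or_pos (t - 1 - j) with h0 | hpos
    · rw [h0, Nat.cast_zero, add_zero]
      omega
    · have := hstair hpos (by omega)
      omega
  refine ⟨coK c (i + (t - 1 : ℕ)) - (t - 1), ?_⟩
  rw [hsocle, coSyz_succ_iff]
  refine ⟨i + (t - 1 : ℕ), t - 1, ?_, hcoK', by simp, rfl⟩
  rw [coSyz_succ_iff]
  refine ⟨i + b, c (i + t), coSyz_zero_iff.mpr ⟨rfl, rfl⟩, by omega, ?_, by omega⟩
  rw [show b = (t - 1 : ℕ) + c (i + t) by omega]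
  push_cast
  ring

theorem extDim_eq_zero_iff [NeZero m] {i : ZMod m} {l : ℕ} :
    extDim c i l = 0 ↔ ∀ r k, ¬ CoSyz c (r + c r - 1) (c r) l i k := by
  simp [extDim, Finite.card_eq_zero_iff, isEmpty_subtype]

theorem extDim_add_one_zero_pos [NeZero m] {i : ZMod m} (hci : c i = 2) :
    0 < extDim c (i + 1) 0 := by
  have : Nonempty {r // ∃ k, CoSyz c (r + c r - 1) (c r) 0 (i + 1) k} :=
    ⟨⟨i, c i, coSyz_zero_iff.mpr ⟨by rw [hci]; push_cast; ring, rfl⟩⟩⟩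
  exact Nat.card_pos

end Nakayama

section LNakayama

variable {n : ℕ} {c : ZMod (n + 1) → ℕ}

theorem natCast_inj_of_le {a b : ℕ} (ha : a ≤ n) (hb : b ≤ n) :
    (a : ZMod (n + 1)) = b ↔ a = b := by
  rw [ZMod.natCast_eq_natCast_iff', Nat.mod_eq_of_lt (by omega), Nat.mod_eq_of_lt (by omega)]

theorem exists_natCast_eq (r : ZMod (n + 1)) : ∃ j ≤ n, (j : ZMod (n + 1)) = r :=
  ⟨r.val, Nat.lt_succ_iff.mp (ZMod.val_lt r), ZMod.natCast_zmod_val r⟩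

theorem natCast_sub_natCast_succ (j : ℕ) : (j : ZMod (n + 1)) - (j + 1 : ℕ) = n := by
  have : ((n + 1 : ℕ) : ZMod (n + 1)) = 0 := ZMod.natCast_self _
  push_cast at this ⊢
  linear_combination -this

theorem natCast_val_add_one (i : ZMod (n + 1)) : ((i.val + 1 : ℕ) : ZMod (n + 1)) = i + 1 := by
  push_cast [ZMod.natCast_zmod_val]; rfl

theorem IsRegular.apply_eq_two (hL : IsLKupisch n c) {i : ZMod (n + 1)}
    (hr : IsRegular c 2 i) : c i = 2 := by
  obtain ⟨-, hc, hsink, -⟩ := hL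
  obtain ⟨hpd, -, hext⟩ := hr
  have h2 := (pdIs_simple_two_iff.mp hpd).1
  by_contra hne
  have hn : n ≠ 0 := by
    rintro rfl
    have := ZMod.val_lt i
    rw [← ZMod.natCast_zmod_val i, show i.val = 0 by omega, hsink] at h2
    omega
  have h23 : i + (2 : ℕ) ≠ i + (3 : ℕ) := fun h => by
    have : (1 : ZMod (n + 1)) = 0 := by push_cast at h; linear_combination -h
    exact hn (by simpa using ZMod.one_eq_zero_iff.mp this)
  have hproj (t : ℕ) (ht : 2 ≤ t) (htc : t ≤ c i) :=
    exists_coSyz_two_of_pdIs_two hc hsink hpd ht htc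
  have : Nontrivial {r // ∃ k, CoSyz c (r + c r - 1) (c r) 2 i k} := .mk
    ⟨⟨_, hproj 2 le_rfl h2⟩, ⟨_, hproj 3 (by norm_num) (by omega)⟩,
      fun h => h23 (congrArg Subtype.val h)⟩
  have : 1 < extDim c i 2 := Finite.one_lt_card
  omega

theorem IsRegular.val_add_two_le (hL : IsLKupisch n c) {i : ZMod (n + 1)}
    (hr : IsRegular c 2 i) : i.val + 2 ≤ n := by
  have hci := hr.apply_eq_two hL
  have hmono := (pdIs_simple_two_iff.mp hr.1).2.1
  have hsink := hL.2.2.1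
  have hlt := ZMod.val_lt i
  have hi : ((i.val : ℕ) : ZMod (n + 1)) = i := ZMod.natCast_zmod_val i
  have hval : i.val ≠ n := fun h => by rw [← hi, h, hsink] at hci; omega
  have hval' : i.val + 1 ≠ n := fun h => by
    rw [← natCast_val_add_one, h, hsink] at hmono; omega
  omega

theorem IsRegular.not_isRegular_add_one (hL : IsLKupisch n c) {i : ZMod (n + 1)}
    (hr : IsRegular c 2 i) : ¬ IsRegular c 2 (i + 1) := fun hr' =>
  (extDim_add_one_zero_pos (hr.apply_eq_two hL)).ne' (hr'.2.1 0 (by norm_num))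

theorem card_isRegular_two_le (hL : IsLKupisch n c) :
    Nat.card {i : ZMod (n + 1) // IsRegular c 2 i} ≤ n / 2 := by
  refine card_le_div_of_spaced (f := fun i => i.1.val) (by norm_num)
    (fun a b h => Subtype.ext (ZMod.val_injective _ h)) (fun i => i.2.val_add_two_le hL)
    fun a b hab => ?_
  by_contra! h
  have hb : b.1 = a.1 + 1 := by
    rw [← ZMod.natCast_zmod_val b.1, show b.1.val = a.1.val + 1 by omega, natCast_val_add_one]
  exact a.2.not_isRegular_add_one hL (hb ▸ b.2)

end LNakayama

section Witness

variable {n : ℕ}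

def altKupisch (n : ℕ) (x : ZMod (n + 1)) : ℕ :=
  if x.val = n then 1 else if x.val % 2 = 1 ∧ x.val + 2 ≤ n then 3 else 2

theorem altKupisch_natCast {j : ℕ} (hj : j ≤ n) :
    altKupisch n j = if j = n then 1 else if j % 2 = 1 ∧ j + 2 ≤ n then 3 else 2 := by
  rw [altKupisch, ZMod.val_cast_of_lt (by omega)]

theorem isLKupisch_altKupisch : IsLKupisch n (altKupisch n) := by
  refine ⟨fun r => ?_, fun r => ?_, ?_, fun r hr => ?_⟩
  · unfold altKupisch; split_ifs <;> omega
  · obtain ⟨j, hj, rfl⟩ := exists_natCast_eq r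
    rcases hj.lt_or_eq with hlt | rfl
    · rw [← Nat.cast_succ, altKupisch_natCast hj, altKupisch_natCast hlt]
      split_ifs <;> omega
    · rw [← Nat.cast_succ, ZMod.natCast_self, ← Nat.cast_zero, altKupisch_natCast le_rfl,
        altKupisch_natCast (Nat.zero_le _)]
      split_ifs <;> omega
  · rw [altKupisch_natCast le_rfl, if_pos rfl]
  · obtain ⟨j, hj, rfl⟩ := exists_natCast_eq r
    rw [altKupisch_natCast hj, if_neg (mt (congrArg _) hr)]
    split_ifs <;> omega

theorem coK_altKupisch_natCast {j : ℕ} (hj : j ≤ n) :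
    coK (altKupisch n) j = if j = 0 then 1 else if j % 2 = 1 ∧ 3 ≤ j then 3 else 2 := by
  have hsink : altKupisch n (j - (j + 1 : ℕ)) = 1 := by
    rw [natCast_sub_natCast_succ, altKupisch_natCast le_rfl, if_pos rfl]
  have hsub {t : ℕ} (ht : t ≤ j) : altKupisch n (j - t) =
      if j - t = n then 1 else if (j - t) % 2 = 1 ∧ j - t + 2 ≤ n then 3 else 2 := by
    rw [← Nat.cast_sub ht, altKupisch_natCast (by omega)]
  split_ifs with h0 h3
  · subst h0
    exact coK_eq_of_isLeast le_rfl (by rw [hsink]) fun t ht1 ht => by omega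
  · refine coK_eq_of_isLeast (by norm_num) ?_ fun t ht1 ht => ?_ <;>
      rw [hsub (by omega)] <;> split_ifs <;> omega
  · refine coK_eq_of_isLeast (by norm_num) ?_ fun t ht1 ht => ?_
    · rcases (show j = 1 ∨ 2 ≤ j by omega) with rfl | hj2
      · rw [hsink]; norm_num
      · rw [hsub hj2]; split_ifs <;> omega
    · rw [hsub (by omega)]; split_ifs <;> omega

theorem natCast_add_altKupisch_sub_one {j : ℕ} :
    (j : ZMod (n + 1)) + altKupisch n j - 1 = (j + altKupisch n j - 1 : ℕ) := by
  have : 1 ≤ altKupisch n j := isLKupisch_altKupisch.1 _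
  rw [Nat.cast_sub (by omega)]
  push_cast
  ring

theorem socle_altKupisch_le {j : ℕ} (hj : j ≤ n) : j + altKupisch n j - 1 ≤ n := by
  rw [altKupisch_natCast hj]; split_ifs <;> omega

theorem coSyz_one_altKupisch {j : ℕ} (hj : j ≤ n) {s : ZMod (n + 1)} {k : ℕ}
    (h : CoSyz (altKupisch n) (j + altKupisch n j - 1) (altKupisch n j) 1 s k) :
    1 ≤ j ∧ (j = n ∨ j % 2 = 0) ∧ s = (j - 1 : ℕ) ∧
      k = coK (altKupisch n) (j + altKupisch n j - 1 : ℕ) - altKupisch n j := by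
  obtain ⟨s₁, k₁, h₀, hlt, rfl, rfl⟩ := coSyz_succ_iff.mp h
  obtain ⟨rfl, rfl⟩ := coSyz_zero_iff.mp h₀
  rw [natCast_add_altKupisch_sub_one] at hlt ⊢
  have hsoc := socle_altKupisch_le hj
  set a := altKupisch n j with ha
  rw [altKupisch_natCast hj] at ha
  rw [coK_altKupisch_natCast hsoc] at hlt
  have hj1 : 1 ≤ j := by split_ifs at ha hlt <;> omega
  refine ⟨hj1, by split_ifs at ha hlt <;> omega, ?_, rfl⟩
  rw [← Nat.cast_sub (by omega)]
  congr 1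
  omega

theorem coSyz_two_altKupisch {j : ℕ} (hj : j ≤ n) {s : ZMod (n + 1)} {k : ℕ}
    (h : CoSyz (altKupisch n) (j + altKupisch n j - 1) (altKupisch n j) 2 s k) :
    2 ≤ j ∧ s = (j - 2 : ℕ) := by
  obtain ⟨s₁, k₁, h₁, hlt, rfl, rfl⟩ := coSyz_succ_iff.mp h
  obtain ⟨hj1, hpar, rfl, rfl⟩ := coSyz_one_altKupisch hj h₁
  have hsoc := socle_altKupisch_le hj
  set a := altKupisch n j with ha
  rw [altKupisch_natCast hj] at ha
  rw [coK_altKupisch_natCast hsoc] at hlt ⊢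
  rw [coK_altKupisch_natCast (by omega)] at hlt
  have hj2 : 2 ≤ j := by split_ifs at ha hlt <;> omega
  refine ⟨hj2, ?_⟩
  rw [← Nat.cast_sub (by split_ifs at ha hlt ⊢ <;> omega)]
  congr 1
  split_ifs at ha hlt ⊢ <;> omega

theorem pdIs_altKupisch {k : ℕ} (hk : 2 * k + 2 ≤ n) :
    PdIs (altKupisch n) (2 * k : ℕ) 1 2 := by
  have h0 := altKupisch_natCast (n := n) (j := 2 * k) (by omega)
  rw [if_neg (by omega), if_neg (by omega)] at h0
  rw [pdIs_simple_two_iff, h0, ← Nat.cast_succ, ← Nat.cast_add, altKupisch_natCast (by omega),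
    altKupisch_natCast (by omega)]
  split_ifs <;> omega

theorem isRegular_altKupisch {k : ℕ} (hk : 2 * k + 2 ≤ n) :
    IsRegular (altKupisch n) 2 (2 * k : ℕ) := by
  refine ⟨pdIs_altKupisch hk, fun l hl => extDim_eq_zero_iff.mpr fun r k' h => ?_, ?_⟩
  · obtain ⟨j, hj, rfl⟩ := exists_natCast_eq r
    interval_cases l
    · obtain ⟨hs, -⟩ := coSyz_zero_iff.mp h
      rw [natCast_add_altKupisch_sub_one, natCast_inj_of_le (a := 2 * k) (by omega)
        (socle_altKupisch_le hj), altKupisch_natCast hj] at hs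
      split_ifs at hs <;> omega
    · obtain ⟨hj1, hpar, hs, -⟩ := coSyz_one_altKupisch hj h
      rw [natCast_inj_of_le (a := 2 * k) (b := j - 1) (by omega) (by omega)] at hs
      omega
  · refine Nat.card_eq_one_iff_unique.mpr ⟨⟨fun ⟨r₁, _, h₁⟩ ⟨r₂, _, h₂⟩ => ?_⟩, ⟨⟨_,
      exists_coSyz_two_of_pdIs_two isLKupisch_altKupisch.2.1 isLKupisch_altKupisch.2.2.1
        (pdIs_altKupisch hk) le_rfl ((pdIs_simple_two_iff.mp (pdIs_altKupisch hk)).1)⟩⟩⟩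
    obtain ⟨j₁, hj₁, rfl⟩ := exists_natCast_eq r₁
    obtain ⟨j₂, hj₂, rfl⟩ := exists_natCast_eq r₂
    obtain ⟨hj₁2, hs₁⟩ := coSyz_two_altKupisch hj₁ h₁
    obtain ⟨hj₂2, hs₂⟩ := coSyz_two_altKupisch hj₂ h₂
    rw [natCast_inj_of_le (a := 2 * k) (b := j₁ - 2) (by omega) (by omega)] at hs₁
    rw [natCast_inj_of_le (a := 2 * k) (b := j₂ - 2) (by omega) (by omega)] at hs₂
    exact Subtype.ext (congrArg Nat.cast (by omega))

theorem card_isRegular_altKupisch :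
    Nat.card {i : ZMod (n + 1) // IsRegular (altKupisch n) 2 i} = n / 2 := by
  refine (card_isRegular_two_le isLKupisch_altKupisch).antisymm ?_
  have hinj : Injective fun k : Fin (n / 2) =>
      (⟨(2 * k : ℕ), isRegular_altKupisch (by omega)⟩ :
        {i : ZMod (n + 1) // IsRegular (altKupisch n) 2 i}) := fun a b h => by
    have := (natCast_inj_of_le (by omega) (by omega)).mp (congrArg Subtype.val h)
    exact Fin.ext (by omega)
  simpa using Nat.card_le_card_of_injective _ hinj

end Witness

/-- A Dyck path of semilength `n` has at most `⌊n/2⌋` 2-hills, and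
this bound is attained.  Consequently an `(n+1)`-LNakayama algebra has at most `⌊n/2⌋`
2-regular simple modules (bound attained), and hence (by Enomoto's bijection between
exact structures and sets of 2-regular simple modules) at most `2 ^ ⌊n/2⌋` exact
structures on its category of finitely generated projective modules. -/
theorem two_hill_bounds (n : ℕ) :
    (∀ p : List Bool, IsDyck n p → numTwoHills p ≤ n / 2) ∧
    (∃ p : List Bool, IsDyck n p ∧ numTwoHills p = n / 2) ∧
    (∀ c : ZMod (n + 1) → ℕ, IsLKupisch n c →
      Nat.card {i : ZMod (n + 1) // IsRegular c 2 i} ≤ n / 2) ∧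
    (∃ c : ZMod (n + 1) → ℕ, IsLKupisch n c ∧
      Nat.card {i : ZMod (n + 1) // IsRegular c 2 i} = n / 2) ∧
    (∀ c : ZMod (n + 1) → ℕ, IsLKupisch n c →
      Nat.card (Set {i : ZMod (n + 1) // IsRegular c 2 i}) ≤ 2 ^ (n / 2)) := by
  refine ⟨fun _ => numTwoHills_le_of_isDyck,
    ⟨twoHillPath n, isDyck_twoHillPath n, numTwoHills_twoHillPath n⟩,
    fun _ => card_isRegular_two_le,
    ⟨altKupisch n, isLKupisch_altKupisch, card_isRegular_altKupisch⟩, fun c hc => ?_⟩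
  rw [card_set_eq_two_pow]
  exact Nat.pow_le_pow_right two_pos (card_isRegular_two_le hc)

end Nak
end

section
/- For 0 < ℓ < n, the number of n-periodic Dyck paths with global shift 0 and exactly ℓ peaks equals (1/n) * Σ_{k | gcd(ℓ,n)} φ(k) * binomial(n/k - 1, ℓ/k - 1) * binomial(n/k, ℓ/k). Equivalently, this counts necklaces [c_0,...,c_{n-1}] (up to cyclic rotation, indices mod n) of integers ≥ 2 with c_{i+1}+1 ≥ c_i for all i, minimal entry exactly 2, and exactly ℓ indices i with c_i ≥ c_{i-1}. -/
/-!
A word `c` of length `m` is determined by its steps `c i + 1 - c (i - 1)`, and every sequence of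
naturals summing to `m` arises this way, from a potential normalised to have minimum `2`; the
peaks of `c` are its nonzero steps. Choosing the `j` positions of the nonzero steps and a
composition of `m` into `j` positive parts gives `C(m - 1, j - 1) * C(m, j)` words of length `m`
with `j` peaks. Rotation by an element of order `k` of `ZMod n` fixes precisely the words of
period `n / k`, i.e. the words of length `n / k` with `l / k` peaks (none unless `k ∣ l`), and
there are `φ k` elements of order `k`; Burnside's lemma then gives the formula.
-/

open Finset Function

namespace Nak

section Compositions

variable {ι κ : Type*} [Fintype ι] [Fintype κ]

instance (N : ℕ) : Finite {f : κ → ℕ // ∑ x, f x = N} := by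
  classical exact Finite.of_equiv _ (Sym.equivNatSumOfFintype κ N)

instance (N : ℕ) (p : (κ → ℕ) → Prop) : Finite {f : κ → ℕ // ∑ x, f x = N ∧ p f} :=
  Finite.of_injective _
    (Subtype.impEmbedding _ (fun f : κ → ℕ => ∑ x, f x = N) fun _ hf => hf.1).injective

def subOneEquiv (N : ℕ) :
    {f : κ → ℕ // ∑ x, f x = N ∧ ∀ x, f x ≠ 0} ≃ {g : κ → ℕ // ∑ x, g x + Fintype.card κ = N} where
  toFun f := ⟨fun x => f.1 x - 1, by
    refine Eq.trans ?_ f.2.1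
    rw [Fintype.card_eq_sum_ones, ← sum_add_distrib]
    exact sum_congr rfl fun x _ => Nat.sub_add_cancel (Nat.one_le_iff_ne_zero.2 (f.2.2 x))⟩
  invFun g := ⟨fun x => g.1 x + 1, by rw [sum_add_distrib, ← Fintype.card_eq_sum_ones, g.2],
    fun _ => Nat.succ_ne_zero _⟩
  left_inv f :=
    Subtype.ext <| funext fun x => Nat.sub_add_cancel (Nat.one_le_iff_ne_zero.2 (f.2.2 x))
  right_inv g := Subtype.ext <| funext fun x => Nat.add_sub_cancel (g.1 x) 1

theorem natCard_sum_eq_and_forall_ne_zero {N : ℕ} (hκ : 0 < Fintype.card κ) (hN : 0 < N) :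
    Nat.card {f : κ → ℕ // ∑ x, f x = N ∧ ∀ x, f x ≠ 0} = (N - 1).choose (Fintype.card κ - 1) := by
  classical
  rw [Nat.card_congr (subOneEquiv N)]
  by_cases hκN : Fintype.card κ ≤ N
  · have hsub : ∀ g : κ → ℕ, ∑ x, g x + Fintype.card κ = N ↔ ∑ x, g x = N - Fintype.card κ :=
      fun g => by omega
    rw [Nat.card_congr ((Equiv.subtypeEquivRight hsub).trans
      (Sym.equivNatSumOfFintype κ (N - Fintype.card κ)).symm), Nat.card_eq_fintype_card,
      Sym.card_sym_eq_choose, ← Nat.choose_symm (by omega)]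
    congr 1 <;> omega
  · rw [Nat.choose_eq_zero_of_lt (by omega), Nat.card_eq_zero]
    exact Or.inl ⟨fun g => by omega⟩

variable [DecidableEq ι]

def restrictSupportEquiv (N : ℕ) (S : Finset ι) :
    {d : ι → ℕ // ∑ i, d i = N ∧ ({i | d i ≠ 0} : Finset ι) = S} ≃
      {f : S → ℕ // ∑ x, f x = N ∧ ∀ x, f x ≠ 0} where
  toFun d := ⟨fun x => d.1 x, by
    obtain ⟨d, rfl, rfl⟩ := d
    rw [sum_coe_sort _ d, sum_filter_ne_zero], fun x => by simpa [← d.2.2] using x.2⟩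
  invFun f := ⟨fun i => if h : i ∈ S then f.1 ⟨i, h⟩ else 0, by
    obtain ⟨f, rfl, -⟩ := f
    rw [← sum_subset (subset_univ S) fun i _ hi => dif_neg hi, ← sum_coe_sort S]
    exact sum_congr rfl fun x _ => dif_pos x.2, by
    ext i
    by_cases h : i ∈ S <;> simp [h, f.2.2]⟩
  left_inv d := by
    ext i
    by_cases h : i ∈ S
    · simp [h]
    · have : d.1 i = 0 := by simpa [← d.2.2] using h
      simp [h, this]
  right_inv f := by ext x; simp

def supportSigmaEquiv (N j : ℕ) :
    {d : ι → ℕ // ∑ i, d i = N ∧ #{i | d i ≠ 0} = j} ≃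
      Σ S : {S : Finset ι // #S = j},
        {d : ι → ℕ // ∑ i, d i = N ∧ ({i | d i ≠ 0} : Finset ι) = S.1} where
  toFun d := ⟨⟨_, d.2.2⟩, ⟨d.1, d.2.1, rfl⟩⟩
  invFun p := ⟨p.2.1, p.2.2.1, by rw [p.2.2.2]; exact p.1.2⟩
  left_inv _ := rfl
  right_inv := by
    rintro ⟨⟨S, hS⟩, ⟨d, hd, hdS⟩⟩
    obtain rfl : ({i | d i ≠ 0} : Finset ι) = S := hdS
    rfl

theorem natCard_sum_eq_and_card_support_eq {N j : ℕ} (hN : 0 < N) (hj : 0 < j) :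
    Nat.card {d : ι → ℕ // ∑ i, d i = N ∧ #{i | d i ≠ 0} = j} =
      (N - 1).choose (j - 1) * (Fintype.card ι).choose j := by
  have hfiber (S : {S : Finset ι // #S = j}) :
      Nat.card {d : ι → ℕ // ∑ i, d i = N ∧ ({i | d i ≠ 0} : Finset ι) = S.1} =
        (N - 1).choose (j - 1) := by
    rw [Nat.card_congr (restrictSupportEquiv N S.1),
      natCard_sum_eq_and_forall_ne_zero (by simp [S.2, hj]) hN, Fintype.card_coe, S.2]
  rw [Nat.card_congr (supportSigmaEquiv N j), Nat.card_sigma, sum_congr rfl fun S _ => hfiber S,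
    sum_const, card_univ, Fintype.card_finset_len, smul_eq_mul, mul_comm]

end Compositions

section Potential

variable {m : ℕ} [NeZero m] {M : Type*} [AddCommMonoid M]

theorem sum_range_natCast (f : ZMod m → M) : ∑ s ∈ range m, f s = ∑ i, f i :=
  sum_nbij' (↑) ZMod.val (by simp) (by simp [ZMod.val_lt])
    (fun s hs => ZMod.val_cast_of_lt (mem_range.1 hs)) (fun i _ => ZMod.natCast_zmod_val i)
    fun _ _ => rfl

theorem _root_.Function.Periodic.eq_apply_zero_of_one {α : Type*} {f : ZMod m → α}
    (h : Periodic f 1) (i : ZMod m) : f i = f 0 := by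
  simpa using h.nsmul_eq i.val

theorem exists_potential {G : Type*} [AddCommGroup G] (δ : ZMod m → G) (hδ : ∑ i, δ i = 0) :
    ∃ P : ZMod m → G, ∀ i, P (i + 1) = P i + δ (i + 1) := by
  set Q : ℕ → G := fun t => ∑ s ∈ range t, δ (s + 1)
  have hQ : Periodic Q m := fun t => by
    simp only [Q, sum_range_add, add_eq_left]
    push_cast
    rw [sum_range_natCast fun i => δ ((t : ZMod m) + i + 1), ← hδ]
    exact Fintype.sum_equiv ((Equiv.addRight 1).trans (Equiv.addLeft (t : ZMod m))) _ _
      fun i => by simp [add_assoc]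
  refine ⟨fun i => Q i.val, fun i => ?_⟩
  dsimp only
  have hval : (i + 1).val = (i.val + 1) % m := by
    rw [show i + 1 = ((i.val + 1 : ℕ) : ZMod m) by push_cast; simp, ZMod.val_natCast]
  rw [hval, ← hQ.nat_mul ((i.val + 1) / m) _, Nat.cast_id, Nat.mod_add_div']
  simp only [Q, sum_range_succ, ZMod.natCast_zmod_val]

end Potential

section Words

variable {m j : ℕ}

noncomputable def peakCount (c : ZMod m → ℕ) : ℕ := Nat.card {i : ZMod m // c (i - 1) ≤ c i}

def IsWord (m j : ℕ) (c : ZMod m → ℕ) : Prop :=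
  (∀ i, 2 ≤ c i) ∧ (∀ i, c i ≤ c (i + 1) + 1) ∧ (∃ i, c i = 2) ∧ peakCount c = j

def Word (m j : ℕ) : Type := {c : ZMod m → ℕ // IsWord m j c}

/-- Truncated subtraction is harmless here: `c (i - 1) ≤ c i + 1` for a word. -/
def step (c : ZMod m → ℕ) (i : ZMod m) : ℕ := c i + 1 - c (i - 1)

theorem step_ne_zero_iff (c : ZMod m → ℕ) (i : ZMod m) : step c i ≠ 0 ↔ c (i - 1) ≤ c i := by
  unfold step; omega

theorem peakCount_eq_card_step_ne_zero [NeZero m] (c : ZMod m → ℕ) :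
    peakCount c = #{i | step c i ≠ 0} := by
  simp only [peakCount, Nat.card_eq_fintype_card, Fintype.card_subtype, step_ne_zero_iff]

theorem natCast_step {c : ZMod m → ℕ} (hc : ∀ i, c i ≤ c (i + 1) + 1) (i : ZMod m) :
    (step c i : ℤ) = c i + 1 - c (i - 1) := by
  have := hc (i - 1)
  rw [sub_add_cancel] at this
  unfold step
  omega

theorem sum_step [NeZero m] {c : ZMod m → ℕ} (hc : ∀ i, c i ≤ c (i + 1) + 1) :
    ∑ i, step c i = m := by
  have hshift : ∑ i, (c (i - 1) : ℤ) = ∑ i, (c i : ℤ) :=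
    Fintype.sum_equiv (Equiv.subRight 1) _ _ fun _ => rfl
  have : (∑ i, step c i : ℤ) = m := by
    simp [natCast_step hc, sum_sub_distrib, sum_add_distrib, hshift]
  exact_mod_cast this

theorem step_injective [NeZero m] : Injective fun c : Word m j => step c.1 := by
  intro c c' h
  obtain ⟨hc2, hc, ⟨i₀, hi₀⟩, -⟩ := c.2
  obtain ⟨hc2', hc', ⟨i₁, hi₁⟩, -⟩ := c'.2
  set e : ZMod m → ℤ := fun i => c.1 i - c'.1 i
  have he : Periodic e 1 := fun i => by
    have := congrFun h (i + 1)
    have h1 := natCast_step hc (i + 1)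
    have h2 := natCast_step hc' (i + 1)
    simp only [add_sub_cancel_right] at this h1 h2
    simp only [e]
    omega
  have h₀ := he.eq_apply_zero_of_one i₀
  have h₁ := he.eq_apply_zero_of_one i₁
  have := hc2' i₀
  have := hc2 i₁
  refine Subtype.ext (funext fun i => ?_)
  have := he.eq_apply_zero_of_one i
  simp only [e] at *
  omega

theorem exists_step_eq [NeZero m] {d : ZMod m → ℕ} (hd : ∑ i, d i = m) :
    ∃ c : ZMod m → ℕ, (∀ i, 2 ≤ c i) ∧ (∀ i, c i ≤ c (i + 1) + 1) ∧ (∃ i, c i = 2) ∧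
      step c = d := by
  obtain ⟨P, hP⟩ := exists_potential (fun i => (d i : ℤ) - 1)
    (by simp [sum_sub_distrib, ← Nat.cast_sum, hd])
  obtain ⟨i₀, hi₀⟩ := Finite.exists_min P
  set c : ZMod m → ℕ := fun i => (P i - P i₀ + 2).toNat
  have hc (i : ZMod m) : (c i : ℤ) = P i - P i₀ + 2 := by
    have := hi₀ i
    simp only [c]
    omega
  have hstep (i : ZMod m) : (c (i + 1) : ℤ) = c i + d (i + 1) - 1 := by
    rw [hc, hc, hP]
    ring
  have hdesc (i : ZMod m) : c i ≤ c (i + 1) + 1 := by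
    have := hstep i
    omega
  refine ⟨c, fun i => ?_, hdesc, ⟨i₀, by simp [c]⟩, funext fun i => ?_⟩
  · have := hc i
    have := hi₀ i
    omega
  · have h₁ := natCast_step hdesc i
    have h₂ := hstep (i - 1)
    rw [sub_add_cancel] at h₂
    omega

variable [NeZero m]

noncomputable def stepEquiv :
    Word m j ≃ {d : ZMod m → ℕ // ∑ i, d i = m ∧ #{i | d i ≠ 0} = j} :=
  Equiv.ofBijective
    (fun c => ⟨step c.1, sum_step c.2.2.1,
      (peakCount_eq_card_step_ne_zero c.1).symm.trans c.2.2.2.2⟩)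
    ⟨fun _ _ h => step_injective (congrArg Subtype.val h), fun d => by
      obtain ⟨c, hc2, hc, hmin, hcd⟩ := exists_step_eq d.2.1
      refine ⟨⟨c, hc2, hc, hmin, ?_⟩, Subtype.ext hcd⟩
      rw [peakCount_eq_card_step_ne_zero, hcd, d.2.2]⟩

instance : Finite (Word m j) := Finite.of_equiv _ stepEquiv.symm

theorem card_word (hj : 0 < j) : Nat.card (Word m j) = (m - 1).choose (j - 1) * m.choose j := by
  rw [Nat.card_congr stepEquiv, natCard_sum_eq_and_card_support_eq (NeZero.pos m) hj, ZMod.card]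

end Words

theorem natCard_preimage_mul {G H F : Type*} [AddGroup G] [AddGroup H] [Finite G]
    [FunLike F G H] [AddMonoidHomClass F G H] {f : F} (hf : Surjective f) (p : H → Prop) :
    Nat.card {g // p (f g)} * Nat.card H = Nat.card G * Nat.card {h // p h} := by
  classical
  have := Finite.of_surjective f hf
  have := Fintype.ofFinite H
  have hfiber (h : H) : Nat.card {g // f g = h} = Nat.card {g // f g = 0} := by
    obtain ⟨g₀, rfl⟩ := hf h
    exact Nat.card_congr (Equiv.subtypeEquiv (Equiv.subRight g₀) fun g => by simp [sub_eq_zero])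
  have hcard (q : H → Prop) :
      Nat.card {g // q (f g)} = Nat.card {h // q h} * Nat.card {g // f g = 0} := by
    rw [← Nat.card_congr (Equiv.sigmaSubtypeFiberEquivSubtype f fun _ => Iff.rfl), Nat.card_sigma,
      sum_congr rfl fun h _ => hfiber h.1, sum_const, card_univ, smul_eq_mul,
      Fintype.card_eq_nat_card]
  have hG := hcard fun _ => True
  rw [Nat.card_congr (Equiv.subtypeUnivEquiv fun _ => trivial),
    Nat.card_congr (Equiv.subtypeUnivEquiv fun _ => trivial)] at hG
  rw [hcard, hG]
  ring

section Periodic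

variable {n p : ℕ} (hp : p ∣ n)

def periodicEquiv {α : Type*} [NeZero n] [NeZero p] :
    (ZMod p → α) ≃ {c : ZMod n → α // Periodic c (p : ZMod n)} where
  toFun c := ⟨c ∘ ZMod.castHom hp (ZMod p), fun i => by
    simp only [comp_apply, map_add, map_natCast, ZMod.natCast_self, add_zero]⟩
  invFun c j := c.1 (j.val : ZMod n)
  left_inv c := funext fun j => by simp only [comp_apply, map_natCast, ZMod.natCast_zmod_val]
  right_inv c := Subtype.ext <| funext fun i => by
    have hi : ((i.val % p : ℕ) : ZMod n) + (i.val / p) • (p : ZMod n) = i := by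
      rw [nsmul_eq_mul, ← Nat.cast_mul, ← Nat.cast_add, Nat.mod_add_div', ZMod.natCast_zmod_val]
    conv_rhs => rw [← hi, c.2.nsmul]
    simp [← ZMod.natCast_val]

variable [NeZero n] [NeZero p]

theorem peakCount_comp_castHom (c : ZMod p → ℕ) :
    peakCount (c ∘ ZMod.castHom hp (ZMod p)) = n / p * peakCount c := by
  have h := natCard_preimage_mul (ZMod.castHom_surjective hp) fun j => c (j - 1) ≤ c j
  simp only [Nat.card_zmod] at h
  simp only [peakCount, comp_apply, map_sub, map_one]
  rw [Nat.div_mul_right_comm hp, ← h, Nat.mul_div_cancel _ (NeZero.pos p)]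

theorem isWord_comp_castHom_iff {l : ℕ} (c : ZMod p → ℕ) :
    IsWord n l (c ∘ ZMod.castHom hp (ZMod p)) ↔
      (∀ j, 2 ≤ c j) ∧ (∀ j, c j ≤ c (j + 1) + 1) ∧ (∃ j, c j = 2) ∧ n / p * peakCount c = l := by
  have hπ := ZMod.castHom_surjective hp
  simp only [IsWord, peakCount_comp_castHom hp, comp_apply, map_add, map_one]
  rw [hπ.forall, hπ.forall, hπ.exists]

end Periodic

section Shift

variable {n l : ℕ}

theorem peakCount_comp_add_right (c : ZMod n → ℕ) (t : ZMod n) :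
    peakCount (fun i => c (i + t)) = peakCount c :=
  Nat.card_congr (Equiv.subtypeEquiv (Equiv.addRight t) fun i => by simp [sub_add_eq_add_sub])

theorem IsWord.comp_add_right {c : ZMod n → ℕ} (hc : IsWord n l c) (t : ZMod n) :
    IsWord n l (fun i => c (i + t)) := by
  obtain ⟨h2, hdesc, ⟨i₀, hi₀⟩, hpeak⟩ := hc
  exact ⟨fun i => h2 _, fun i => by simpa only [add_right_comm] using hdesc (i + t),
    ⟨i₀ - t, by simpa using hi₀⟩, (peakCount_comp_add_right c t).trans hpeak⟩

instance : AddAction (ZMod n) (Word n l) where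
  vadd t c := ⟨fun i => c.1 (i + t), c.2.comp_add_right t⟩
  zero_vadd c := Subtype.ext <| funext fun i => congrArg c.1 (add_zero i)
  add_vadd s t c := Subtype.ext <| funext fun i => congrArg c.1 (add_assoc i s t).symm

theorem vadd_apply (t : ZMod n) (c : Word n l) (i : ZMod n) : (t +ᵥ c).1 i = c.1 (i + t) := rfl

theorem mem_fixedBy_iff (t : ZMod n) (c : Word n l) :
    c ∈ AddAction.fixedBy (Word n l) t ↔ Periodic c.1 t :=
  ⟨fun h i => congrFun (congrArg Subtype.val h) i, fun h => Subtype.ext (funext h)⟩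

theorem orbitRel_iff (a b : Word n l) :
    AddAction.orbitRel (ZMod n) (Word n l) a b ↔ ∃ t : ZMod n, ∀ i, b.1 i = a.1 (i + t) := by
  rw [AddAction.orbitRel_apply, AddAction.mem_orbit_iff]
  constructor
  · rintro ⟨t, rfl⟩
    exact ⟨-t, fun i => by simp [vadd_apply]⟩
  · rintro ⟨t, ht⟩
    exact ⟨-t, Subtype.ext <| funext fun i => by simp [vadd_apply, ht]⟩

theorem periodic_iff_periodic_gcd [NeZero n] {α : Type*} (c : ZMod n → α) (t : ZMod n) :
    Periodic c t ↔ Periodic c (n.gcd t.val : ZMod n) := by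
  constructor
  · intro h
    have hbezout : (n.gcd t.val : ZMod n) = Nat.gcdB n t.val • t := by
      have := congrArg (Int.cast : ℤ → ZMod n) (Nat.gcd_eq_gcd_ab n t.val)
      push_cast at this
      rw [ZMod.natCast_self, ZMod.natCast_zmod_val] at this
      rw [this, zsmul_eq_mul]
      ring
    rw [hbezout]
    exact h.zsmul _
  · intro h
    obtain ⟨q, hq⟩ := Nat.gcd_dvd_right n t.val
    have : t = q • (n.gcd t.val : ZMod n) := by
      rw [nsmul_eq_mul, ← Nat.cast_mul, mul_comm, ← hq, ZMod.natCast_zmod_val]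
    rw [this]
    exact h.nsmul q

theorem card_periodic_word [NeZero n] {p : ℕ} [NeZero p] (hp : p ∣ n) :
    Nat.card {c : Word n l // Periodic c.1 (p : ZMod n)} =
      if n / p ∣ l then Nat.card (Word p (l / (n / p))) else 0 := by
  have hk : n / p ≠ 0 := (Nat.div_pos (Nat.le_of_dvd (NeZero.pos n) hp) (NeZero.pos p)).ne'
  calc Nat.card {c : Word n l // Periodic c.1 (p : ZMod n)}
      = Nat.card {c : {c : ZMod n → ℕ // Periodic c (p : ZMod n)} // IsWord n l c.1} :=
        Nat.card_congr ⟨fun c => ⟨⟨c.1.1, c.2⟩, c.1.2⟩, fun c => ⟨⟨c.1.1, c.2⟩, c.1.2⟩,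
          fun _ => rfl, fun _ => rfl⟩
    _ = Nat.card {c : ZMod p → ℕ // IsWord n l (c ∘ ZMod.castHom hp (ZMod p))} :=
        (Nat.card_congr ((periodicEquiv hp).subtypeEquiv fun _ => Iff.rfl)).symm
    _ = _ := by
      simp_rw [isWord_comp_castHom_iff]
      split_ifs with hkl
      · obtain ⟨q, rfl⟩ := hkl
        rw [Nat.mul_div_cancel_left q (Nat.pos_of_ne_zero hk)]
        exact Nat.card_congr (Equiv.subtypeEquivRight fun c => by
          simp only [IsWord, mul_right_inj' hk])
      · exact Nat.card_eq_zero.2 (Or.inl ⟨fun c => hkl ⟨_, c.2.2.2.2.symm⟩⟩)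

theorem card_fixedBy_s18 [NeZero n] (hl : 0 < l) (t : ZMod n) :
    Nat.card (AddAction.fixedBy (Word n l) t) =
      if addOrderOf t ∣ l then
        (n / addOrderOf t - 1).choose (l / addOrderOf t - 1) *
          (n / addOrderOf t).choose (l / addOrderOf t)
      else 0 := by
  have hp : n.gcd t.val ∣ n := Nat.gcd_dvd_left _ _
  have : NeZero (n.gcd t.val) := ⟨(Nat.gcd_pos_of_pos_left _ (NeZero.pos n)).ne'⟩
  have hk : addOrderOf t = n / n.gcd t.val := by
    conv_lhs => rw [← ZMod.natCast_zmod_val t]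
    exact ZMod.addOrderOf_coe _ (NeZero.ne n)
  rw [Nat.card_congr (Equiv.subtypeEquivRight fun c =>
    (mem_fixedBy_iff t c).trans (periodic_iff_periodic_gcd c.1 t)), card_periodic_word hp, hk,
    Nat.div_div_self hp (NeZero.ne n)]
  split_ifs with hkl
  · exact card_word (Nat.div_pos (Nat.le_of_dvd hl hkl) (Nat.pos_of_dvd_of_pos hkl hl))
  · rfl

end Shift

theorem sum_addOrderOf {G M : Type*} [AddGroup G] [Fintype G] [IsAddCyclic G] [AddCommMonoid M]
    (f : ℕ → M) : ∑ t : G, f (addOrderOf t) = ∑ k ∈ (Fintype.card G).divisors, k.totient • f k := by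
  rw [← sum_fiberwise_of_maps_to (g := addOrderOf) (t := (Fintype.card G).divisors)
    fun t _ => Nat.mem_divisors.2 ⟨addOrderOf_dvd_card, Fintype.card_ne_zero⟩]
  refine sum_congr rfl fun k hk => ?_
  rw [sum_congr rfl fun t ht => by rw [(mem_filter.1 ht).2], sum_const,
    IsAddCyclic.card_addOrderOf_eq_totient (Nat.dvd_of_mem_divisors hk)]

theorem card_orbits_mul {n l : ℕ} [NeZero n] (hl : 0 < l) :
    Nat.card (Quotient (AddAction.orbitRel (ZMod n) (Word n l))) * n =
      ∑ k ∈ (l.gcd n).divisors,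
        k.totient * (n / k - 1).choose (l / k - 1) * (n / k).choose (l / k) := by
  classical
  have := Fintype.ofFinite (Word n l)
  have hburnside := AddAction.sum_card_fixedBy_eq_card_orbits_mul_card_addGroup (ZMod n) (Word n l)
  rw [ZMod.card] at hburnside
  rw [Nat.card_eq_fintype_card, ← hburnside]
  simp_rw [Fintype.card_eq_nat_card, card_fixedBy_s18 hl]
  refine (sum_addOrderOf fun k =>
    if k ∣ l then (n / k - 1).choose (l / k - 1) * (n / k).choose (l / k) else 0).trans ?_
  rw [ZMod.card, ← Nat.divisors_filter_dvd_of_dvd (NeZero.ne n) (Nat.gcd_dvd_right l n),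
    sum_filter]
  refine sum_congr rfl fun k hk => ?_
  simp only [Nat.dvd_gcd_iff, Nat.dvd_of_mem_divisors hk, and_true, smul_eq_mul, mul_ite, mul_zero,
    mul_assoc]

/-- For `0 < l < n`, the number of `n`-periodic Dyck paths with global
shift `0` and exactly `l` peaks, i.e. the number of necklaces `[c 0, …, c (n-1)]` (up to
cyclic rotation) of integers `≥ 2` with `c i ≤ c (i+1) + 1`, minimal entry exactly `2`,
and exactly `l` indices `i` with `c i ≥ c (i-1)`, equals
`(1/n) * ∑_{k ∣ gcd(l,n)} φ(k) * binomial (n/k - 1) (l/k - 1) * binomial (n/k) (l/k)`. -/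
theorem periodic_peaks_count (n l : ℕ) (hl : 0 < l) (hln : l < n) :
    (Nat.card (Quot (fun (a b : {c : ZMod n → ℕ // (∀ i, 2 ≤ c i) ∧
          (∀ i, c i ≤ c (i + 1) + 1) ∧ (∃ i, c i = 2) ∧
          Nat.card {i : ZMod n // c (i - 1) ≤ c i} = l}) =>
        ∃ t : ZMod n, ∀ i, b.1 i = a.1 (i + t))) : ℚ) =
      (1 : ℚ) / n * ∑ k ∈ (Nat.gcd l n).divisors, (k.totient : ℚ) *
        ((n / k - 1).choose (l / k - 1) : ℚ) * ((n / k).choose (l / k) : ℚ) := by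
  have : NeZero n := ⟨by omega⟩
  have e : Quot (fun a b : Word n l => ∃ t : ZMod n, ∀ i, b.1 i = a.1 (i + t)) ≃
      Quotient (AddAction.orbitRel (ZMod n) (Word n l)) :=
    Quot.congrRight fun a b => (orbitRel_iff a b).symm
  have hcard := card_orbits_mul (n := n) hl
  rw [← Nat.card_congr e] at hcard
  rw [one_div_mul_eq_div, eq_div_iff (Nat.cast_ne_zero.2 (NeZero.ne n))]
  exact_mod_cast hcard

end Nak
end
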